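/- arXiv:math-ph/0611079 — 6 statements merged into one kernel-verified Lean document; each statement's English description precedes it below -/
import Mathlib

section
/- Let d, N ≥ 1, let W ⊆ ℝ^d × ℝ^N be open with coordinates (w, z), z = (z_1, …, z_N), and let p, F_1, …, F_N : W → ℝ be smooth. The following are equivalent: (i) for every a ∈ {1, …, N}, F_a = ∂_{z_a}( p + Σ_{b=1}^{N} z_b F_b ) on W (equivalently, ∂_{z_a} p + Σ_{b} z_b ∂_{z_a} F_b = 0 on W for every a); (ii) there exists a smooth function L : W → ℝ such that F_a = ∂_{z_a} L for every a and p = L − Σ_{a} z_a ∂_{z_a} L on W. Moreover, if (i) holds, then for every smooth L : W → ℝ satisfying F_a = ∂_{z_a} L for all a, the function p − ( L − Σ_a z_a ∂_{z_a} L ) has vanishing partial derivatives with respect to all variables z_a. -/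
/-!
With `G = p + Σ_b z_b F_b`, condition (i) reads `F = ∂_z G`. Whenever `F = ∂_z L` on `W`,
pointwise algebra gives `p − (L − Σ_b z_b ∂_{z_b} L) = G − L` on `W`. Taking `L = G` yields
(ii); conversely, under (ii) this identity forces `G = L` near every point of `W`, so
`∂_z G = ∂_z L = F`. Under (i), differentiating the identity gives `∂_z G − ∂_z L = F − F = 0`.
-/

open Set Filter Topology

section

variable {E ι : Type*} [NormedAddCommGroup E] [NormedSpace ℝ E] [Fintype ι]
  (z : ι → E → ℝ) (v : ι → E)

/- A relation `(p, F)` is generated by a Lagrangian `L` when `F_b = ∂_{v_b} L` and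
`p = pressureOf z v L`; `lagrangianOf z p F` is then the only candidate for `L`. -/
def lagrangianOf (p : E → ℝ) (F : ι → E → ℝ) : E → ℝ :=
  fun q => p q + ∑ b, z b q * F b q

noncomputable def pressureOf (L : E → ℝ) : E → ℝ :=
  fun q => L q - ∑ b, z b q * fderiv ℝ L q (v b)

variable {z v}

theorem ContDiffOn.lagrangianOf {n : WithTop ℕ∞} {W : Set E} {p : E → ℝ} {F : ι → E → ℝ}
    (hz : ∀ b, ContDiff ℝ n (z b)) (hp : ContDiffOn ℝ n p W)
    (hF : ∀ b, ContDiffOn ℝ n (F b) W) :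
    ContDiffOn ℝ n (_root_.lagrangianOf z p F) W :=
  hp.add (ContDiffOn.sum fun b _ => (hz b).contDiffOn.mul (hF b))

theorem sub_pressureOf_eqOn {W : Set E} {p L : E → ℝ} {F : ι → E → ℝ}
    (hFL : ∀ b, ∀ x ∈ W, F b x = fderiv ℝ L x (v b)) :
    EqOn (fun q => p q - pressureOf z v L q) (fun q => lagrangianOf z p F q - L q) W := by
  intro x hx
  simp only [pressureOf, lagrangianOf, ← hFL _ x hx]
  ring

theorem pressureOf_lagrangianOf_eqOn {W : Set E} {p : E → ℝ} {F : ι → E → ℝ}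
    (hF : ∀ b, ∀ x ∈ W, F b x = fderiv ℝ (lagrangianOf z p F) x (v b)) :
    EqOn p (pressureOf z v (lagrangianOf z p F)) W := fun _ hx =>
  sub_eq_zero.mp ((sub_pressureOf_eqOn hF hx).trans (sub_self _))

theorem lagrangianOf_eventuallyEq {W : Set E} (hW : IsOpen W) {p L : E → ℝ} {F : ι → E → ℝ}
    (hFL : ∀ b, ∀ x ∈ W, F b x = fderiv ℝ L x (v b)) (hp : EqOn p (pressureOf z v L) W)
    {x : E} (hx : x ∈ W) :
    lagrangianOf z p F =ᶠ[𝓝 x] L := by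
  filter_upwards [hW.mem_nhds hx] with q hq
  exact sub_eq_zero.mp ((sub_pressureOf_eqOn hFL hq).symm.trans (sub_eq_zero.mpr (hp hq)))

theorem fderiv_sub_pressureOf {W : Set E} (hW : IsOpen W) {p L : E → ℝ} {F : ι → E → ℝ}
    (hFL : ∀ b, ∀ x ∈ W, F b x = fderiv ℝ L x (v b)) {x : E} (hx : x ∈ W)
    (hG : DifferentiableAt ℝ (lagrangianOf z p F) x) (hL : DifferentiableAt ℝ L x) :
    fderiv ℝ (fun q => p q - pressureOf z v L q) x =
      fderiv ℝ (lagrangianOf z p F) x - fderiv ℝ L x := by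
  rw [((sub_pressureOf_eqOn hFL).eventuallyEq_of_mem (hW.mem_nhds hx)).fderiv_eq]
  exact fderiv_fun_sub hG hL

end

theorem second_contact_form_vanishes_iff_semi_lagrangian_general
    (d N : ℕ)
    (W : Set ((Fin d → ℝ) × (Fin N → ℝ))) (hW : IsOpen W)
    (p : (Fin d → ℝ) × (Fin N → ℝ) → ℝ)
    (F : Fin N → (Fin d → ℝ) × (Fin N → ℝ) → ℝ)
    (hp : ContDiffOn ℝ (⊤ : ℕ∞) p W)
    (hF : ∀ a, ContDiffOn ℝ (⊤ : ℕ∞) (F a) W) :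
    ((∀ a : Fin N, ∀ x ∈ W,
        F a x = fderiv ℝ (fun q => p q + ∑ b, q.2 b * F b q) x
          ((0 : Fin d → ℝ), Pi.single a 1)) ↔
      (∃ L : (Fin d → ℝ) × (Fin N → ℝ) → ℝ, ContDiffOn ℝ (⊤ : ℕ∞) L W ∧
        (∀ a : Fin N, ∀ x ∈ W,
          F a x = fderiv ℝ L x ((0 : Fin d → ℝ), Pi.single a 1)) ∧
        (∀ x ∈ W,
          p x = L x - ∑ a, x.2 a * fderiv ℝ L x ((0 : Fin d → ℝ), Pi.single a 1)))) ∧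
    ((∀ a : Fin N, ∀ x ∈ W,
        F a x = fderiv ℝ (fun q => p q + ∑ b, q.2 b * F b q) x
          ((0 : Fin d → ℝ), Pi.single a 1)) →
      ∀ L : (Fin d → ℝ) × (Fin N → ℝ) → ℝ, ContDiffOn ℝ (⊤ : ℕ∞) L W →
        (∀ a : Fin N, ∀ x ∈ W,
          F a x = fderiv ℝ L x ((0 : Fin d → ℝ), Pi.single a 1)) →
        ∀ a : Fin N, ∀ x ∈ W,
          fderiv ℝ (fun q => p q - (L q - ∑ b, q.2 b *
              fderiv ℝ L q ((0 : Fin d → ℝ), Pi.single b 1))) x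
            ((0 : Fin d → ℝ), Pi.single a 1) = 0) := by
  let z : Fin N → (Fin d → ℝ) × (Fin N → ℝ) → ℝ := fun b q => q.2 b
  let e : Fin N → (Fin d → ℝ) × (Fin N → ℝ) := fun b => (0, Pi.single b 1)
  have hG : ContDiffOn ℝ (⊤ : ℕ∞) (lagrangianOf z p F) W :=
    .lagrangianOf (fun b => (contDiff_apply ℝ ℝ b).comp contDiff_snd) hp hF
  have differentiableAt {L : (Fin d → ℝ) × (Fin N → ℝ) → ℝ}
      (hL : ContDiffOn ℝ (⊤ : ℕ∞) L W) {x} (hx : x ∈ W) : DifferentiableAt ℝ L x :=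
    (hL.differentiableOn (by simp)).differentiableAt (hW.mem_nhds hx)
  refine ⟨⟨fun h => ⟨_, hG, h, pressureOf_lagrangianOf_eqOn h⟩, ?_⟩, ?_⟩
  · rintro ⟨L, -, hFL, hpL⟩ a x hx
    rw [hFL a x hx]
    exact DFunLike.congr_fun (lagrangianOf_eventuallyEq (v := e) hW hFL hpL hx).fderiv_eq.symm _
  · intro h L hL hFL a x hx
    calc _ = fderiv ℝ (lagrangianOf z p F) x (e a) - fderiv ℝ L x (e a) :=
          DFunLike.congr_fun (fderiv_sub_pressureOf hW hFL hx (differentiableAt hG hx)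
            (differentiableAt hL hx)) (e a)
      _ = F a x - F a x := congrArg₂ (· - ·) (h a x hx).symm (hFL a x hx).symm
      _ = 0 := sub_self _

/-- On an open set `W ⊆ ℝ^d × ℝ^N` with coordinates `(w, z)`,
for smooth `p, F_1, …, F_N : W → ℝ`, the condition
`F_a = ∂_{z_a}(p + Σ_b z_b F_b)` on `W` for all `a` (vanishing of the second
contact form) is equivalent to the existence of a smooth `L : W → ℝ` with
`F_a = ∂_{z_a} L` and `p = L − Σ_a z_a ∂_{z_a} L` on `W` (semi-Lagrangian form);
moreover, under the first condition, for every smooth `L` with `F_a = ∂_{z_a} L`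
the function `p − (L − Σ_a z_a ∂_{z_a} L)` has vanishing `z`-partials on `W`. -/
theorem second_contact_form_vanishes_iff_semi_lagrangian
    (d N : ℕ) (hd : 1 ≤ d) (hN : 1 ≤ N)
    (W : Set ((Fin d → ℝ) × (Fin N → ℝ))) (hW : IsOpen W)
    (p : (Fin d → ℝ) × (Fin N → ℝ) → ℝ)
    (F : Fin N → (Fin d → ℝ) × (Fin N → ℝ) → ℝ)
    (hp : ContDiffOn ℝ (⊤ : ℕ∞) p W)
    (hF : ∀ a, ContDiffOn ℝ (⊤ : ℕ∞) (F a) W) :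
    ((∀ a : Fin N, ∀ x ∈ W,
        F a x = fderiv ℝ (fun q => p q + ∑ b, q.2 b * F b q) x
          ((0 : Fin d → ℝ), Pi.single a 1)) ↔
      (∃ L : (Fin d → ℝ) × (Fin N → ℝ) → ℝ, ContDiffOn ℝ (⊤ : ℕ∞) L W ∧
        (∀ a : Fin N, ∀ x ∈ W,
          F a x = fderiv ℝ L x ((0 : Fin d → ℝ), Pi.single a 1)) ∧
        (∀ x ∈ W,
          p x = L x - ∑ a, x.2 a * fderiv ℝ L x ((0 : Fin d → ℝ), Pi.single a 1)))) ∧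
    ((∀ a : Fin N, ∀ x ∈ W,
        F a x = fderiv ℝ (fun q => p q + ∑ b, q.2 b * F b q) x
          ((0 : Fin d → ℝ), Pi.single a 1)) →
      ∀ L : (Fin d → ℝ) × (Fin N → ℝ) → ℝ, ContDiffOn ℝ (⊤ : ℕ∞) L W →
        (∀ a : Fin N, ∀ x ∈ W,
          F a x = fderiv ℝ L x ((0 : Fin d → ℝ), Pi.single a 1)) →
        ∀ a : Fin N, ∀ x ∈ W,
          fderiv ℝ (fun q => p q - (L q - ∑ b, q.2 b *
              fderiv ℝ L q ((0 : Fin d → ℝ), Pi.single b 1))) x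
            ((0 : Fin d → ℝ), Pi.single a 1) = 0) :=
  second_contact_form_vanishes_iff_semi_lagrangian_general d N W hW p F hp hF
end

section
/- Fix integers n ≥ 0, m ≥ 1, let U₀ ⊆ ℝ^{n+1} be open, let g : U₀ → ℝ be smooth and everywhere positive, and let F^μ_i, Π_i : U₀ × ℝ^m × ℝ^{m×(n+1)} → ℝ (0 ≤ μ ≤ n, 1 ≤ i ≤ m) be smooth. Call a smooth map ξ : W → ℝ^m on an open W ⊆ U₀ × ℝ^m a C-admissible vertical variation if Σ_{μ=0}^{n} Σ_{i=1}^{m} F^μ_i(x,y,z) · ( ∂_{x^μ} ξ^i(x,y) + Σ_{j=1}^{m} z^j_μ ∂_{y^j} ξ^i(x,y) ) = 0 for all (x,y) ∈ W and all z ∈ ℝ^{m×(n+1)}. Then for a smooth map s : U → ℝ^m (U ⊆ U₀ open) the following are equivalent: (1) for every open W ⊆ U₀ × ℝ^m, every C-admissible vertical variation ξ on W, and every x ∈ U with (x, s(x)) ∈ W, one has Σ_μ ∂_{x^μ} [ Σ_i ξ^i(x, s(x)) F^μ_i(x, s(x), Ds(x)) ] + Σ_{μ,i} ∂_{x^μ}(log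 g)(x) · ξ^i(x, s(x)) F^μ_i(x, s(x), Ds(x)) = Σ_i ξ^i(x, s(x)) Π_i(x, s(x), Ds(x)); (2) s is a solution of the balance system: for every i ∈ {1,…,m} and every x ∈ U, Σ_μ ∂_{x^μ} [ F^μ_i(x, s(x), Ds(x)) ] + Σ_μ ∂_{x^μ}(log g)(x) · F^μ_i(x, s(x), Ds(x)) = Π_i(x, s(x), Ds(x)). -/
/-- The first jet (matrix of first partial derivatives) of a section
`s : ℝ^{n+1} → ℝ^m` at a point `x`. -/
noncomputable def jet1 (n m : ℕ) (s : (Fin (n + 1) → ℝ) → Fin m → ℝ)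
    (x : Fin (n + 1) → ℝ) : Fin m → Fin (n + 1) → ℝ :=
  fun i ν => fderiv ℝ (fun t => s t i) x (Pi.single ν 1)

/-!
By the Leibniz rule, the left-hand side of the variational equation for `ξ` splits as
`∑ μ i, F^μ_i · d_μ (ξ^i ∘ (id, s)) + ∑ i, ξ^i · B_i`, where `B_i` is the left-hand side of the
`i`-th balance equation. By the chain rule, `d_μ (ξ^i ∘ (id, s)) = ∂_{x^μ} ξ^i + ∑ j, (Ds)^j_μ ∂_{y^j} ξ^i`,
so the first sum is the admissibility expression of `ξ` at `z = Ds(x)` and vanishes; hence the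
balance system implies the variational equations. Conversely, the constant variations `ξ = eᵢ`
are admissible, and for them the variational equation is the `i`-th balance equation.
-/

open Set Filter Topology

section WeightedDivergence

variable {E : Type*} [NormedAddCommGroup E] [NormedSpace ℝ E] {ι κ : Type*} [Fintype ι]
  [Fintype κ]

/-- With `v` the standard basis and `w μ = ∂_μ (log g)` this is the divergence with respect to
the density `g`, namely `g⁻¹ ∑ μ, ∂_μ (g G^μ)`. -/
noncomputable def weightedDiv (v : ι → E) (w : ι → ℝ) (G : ι → E → ℝ) (x : E) : ℝ :=
  ∑ μ, fderiv ℝ (G μ) x (v μ) + ∑ μ, w μ * G μ x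

lemma weightedDiv_sum_mul (v : ι → E) (w : ι → ℝ) {f : κ → E → ℝ} {G : ι → κ → E → ℝ}
    {x : E} (hf : ∀ j, DifferentiableAt ℝ (f j) x) (hG : ∀ μ j, DifferentiableAt ℝ (G μ j) x) :
    weightedDiv v w (fun μ t => ∑ j, f j t * G μ j t) x =
      ∑ μ, ∑ j, G μ j x * fderiv ℝ (f j) x (v μ)
        + ∑ j, f j x * weightedDiv v w (fun μ => G μ j) x := by
  have hleibniz : ∀ μ, fderiv ℝ (fun t => ∑ j, f j t * G μ j t) x (v μ) =
      ∑ j, (G μ j x * fderiv ℝ (f j) x (v μ) + f j x * fderiv ℝ (G μ j) x (v μ)) := by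
    intro μ
    rw [fderiv_fun_sum fun j _ => (hf j).fun_mul (hG μ j), sum_apply]
    refine Finset.sum_congr rfl fun j _ => ?_
    rw [fderiv_fun_mul (hf j) (hG μ j)]
    simp only [add_apply, smul_apply, smul_eq_mul]
    ring
  simp only [weightedDiv, hleibniz, Finset.sum_add_distrib, Finset.mul_sum, mul_add]
  rw [add_assoc]
  congr 2
  · exact Finset.sum_comm
  · rw [Finset.sum_comm]
    exact Finset.sum_congr rfl fun _ _ => Finset.sum_congr rfl fun _ _ => by ring

end WeightedDivergence

section Jet

variable {n m : ℕ} {s : (Fin (n + 1) → ℝ) → Fin m → ℝ} {x : Fin (n + 1) → ℝ}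
  {U : Set (Fin (n + 1) → ℝ)}

lemma jet1_apply (hs : DifferentiableAt ℝ s x) (i : Fin m) (ν : Fin (n + 1)) :
    jet1 n m s x i ν = fderiv ℝ s x (Pi.single ν 1) i := by
  simp [jet1, fderiv_apply hs]

lemma contDiffOn_jet1 {k : WithTop ℕ∞} (hU : IsOpen U) (hs : ContDiffOn ℝ (k + 1) s U) :
    ContDiffOn ℝ k (jet1 n m s) U :=
  contDiffOn_pi.2 fun i => contDiffOn_pi.2 fun _ =>
    ((contDiffOn_pi.1 hs i).fderiv_of_isOpen hU le_rfl).clm_apply contDiffOn_const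

lemma differentiableAt_comp_jet1_prolongation {U₀ : Set (Fin (n + 1) → ℝ)}
    {Φ : (Fin (n + 1) → ℝ) × (Fin m → ℝ) × (Fin m → Fin (n + 1) → ℝ) → ℝ}
    (hΦ : DifferentiableOn ℝ Φ (U₀ ×ˢ univ)) (hU : IsOpen U) (hUsub : U ⊆ U₀)
    (hs : ContDiffOn ℝ 2 s U) (hx : x ∈ U) :
    DifferentiableAt ℝ (fun t => Φ (t, s t, jet1 n m s t)) x := by
  have hjet : ContDiffOn ℝ 1 (jet1 n m s) U := contDiffOn_jet1 hU hs
  have hprolong : DifferentiableAt ℝ (fun t => (t, s t, jet1 n m s t)) x :=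
    differentiableAt_id.prodMk (((hs.differentiableOn (by norm_num)).differentiableAt
      (hU.mem_nhds hx)).prodMk ((hjet.differentiableOn one_ne_zero).differentiableAt
        (hU.mem_nhds hx)))
  have hnhds : U₀ ×ˢ univ ∈ 𝓝 (x, s x, jet1 n m s x) :=
    mem_of_superset ((hU.prod isOpen_univ).mem_nhds ⟨hx, trivial⟩) (prod_mono hUsub le_rfl)
  exact (hΦ.differentiableAt hnhds).comp x hprolong

lemma fderiv_comp_graph_apply_single (hs : DifferentiableAt ℝ s x)
    {φ : (Fin (n + 1) → ℝ) × (Fin m → ℝ) → ℝ} (hφ : DifferentiableAt ℝ φ (x, s x))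
    (μ : Fin (n + 1)) :
    fderiv ℝ (fun t => φ (t, s t)) x (Pi.single μ 1) =
      fderiv ℝ φ (x, s x) (Pi.single μ 1, 0)
        + ∑ j, jet1 n m s x j μ * fderiv ℝ φ (x, s x) (0, Pi.single j 1) := by
  have hcomp : HasFDerivAt (fun t => φ (t, s t))
      ((fderiv ℝ φ (x, s x)).comp ((ContinuousLinearMap.id ℝ _).prod (fderiv ℝ s x))) x :=
    hφ.hasFDerivAt.comp x ((hasFDerivAt_id x).prodMk hs.hasFDerivAt)
  have hsplit : ((Pi.single μ 1 : Fin (n + 1) → ℝ), fderiv ℝ s x (Pi.single μ 1)) =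
      (Pi.single μ 1, 0) + ∑ j, jet1 n m s x j μ • ((0 : Fin (n + 1) → ℝ), Pi.single j 1) := by
    refine Prod.ext (by simp [Prod.fst_sum]) ?_
    simpa [Prod.snd_sum, jet1_apply hs] using pi_eq_sum_univ' (fderiv ℝ s x (Pi.single μ 1))
  rw [hcomp.fderiv, ContinuousLinearMap.comp_apply, ContinuousLinearMap.prod_apply,
    ContinuousLinearMap.id_apply, hsplit, map_add, map_sum]
  simp only [map_smul, smul_eq_mul]

end Jet

theorem balance_system_poincare_cartan_formulation_general
    (n m : ℕ)
    (U₀ : Set (Fin (n + 1) → ℝ))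
    (g : (Fin (n + 1) → ℝ) → ℝ)
    (F : Fin (n + 1) → Fin m →
      ((Fin (n + 1) → ℝ) × (Fin m → ℝ) × (Fin m → Fin (n + 1) → ℝ)) → ℝ)
    (Psrc : Fin m →
      ((Fin (n + 1) → ℝ) × (Fin m → ℝ) × (Fin m → Fin (n + 1) → ℝ)) → ℝ)
    (hF : ∀ μ i, ContDiffOn ℝ (⊤ : ℕ∞) (F μ i)
      (U₀ ×ˢ (Set.univ : Set ((Fin m → ℝ) × (Fin m → Fin (n + 1) → ℝ)))))
    (U : Set (Fin (n + 1) → ℝ)) (hU : IsOpen U) (hUsub : U ⊆ U₀)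
    (s : (Fin (n + 1) → ℝ) → Fin m → ℝ) (hs : ContDiffOn ℝ (⊤ : ℕ∞) s U) :
    -- (1) the variational equation holds for all C-admissible vertical variations
    (∀ Wv : Set ((Fin (n + 1) → ℝ) × (Fin m → ℝ)), IsOpen Wv →
      Wv ⊆ U₀ ×ˢ (Set.univ : Set (Fin m → ℝ)) →
      ∀ ξ : ((Fin (n + 1) → ℝ) × (Fin m → ℝ)) → Fin m → ℝ,
        ContDiffOn ℝ (⊤ : ℕ∞) ξ Wv →
        -- C-admissibility of the vertical variation ξ :
        (∀ P ∈ Wv, ∀ z : Fin m → Fin (n + 1) → ℝ,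
          ∑ μ, ∑ i, F μ i (P.1, P.2, z) *
            (fderiv ℝ (fun Q => ξ Q i) P (Pi.single μ 1, 0)
              + ∑ j, z j μ * fderiv ℝ (fun Q => ξ Q i) P (0, Pi.single j 1)) = 0) →
        ∀ x ∈ U, (x, s x) ∈ Wv →
          ∑ μ, fderiv ℝ
              (fun t => ∑ i, ξ (t, s t) i * F μ i (t, s t, jet1 n m s t)) x
              (Pi.single μ 1)
            + ∑ μ, ∑ i, fderiv ℝ (fun t => Real.log (g t)) x (Pi.single μ 1) *
                (ξ (x, s x) i * F μ i (x, s x, jet1 n m s x))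
            = ∑ i, ξ (x, s x) i * Psrc i (x, s x, jet1 n m s x))
    ↔
    -- (2) s is a solution of the balance system
    (∀ i, ∀ x ∈ U,
      ∑ μ, fderiv ℝ (fun t => F μ i (t, s t, jet1 n m s t)) x (Pi.single μ 1)
        + ∑ μ, fderiv ℝ (fun t => Real.log (g t)) x (Pi.single μ 1) *
            F μ i (x, s x, jet1 n m s x)
        = Psrc i (x, s x, jet1 n m s x)) := by
  have hs2 : ContDiffOn ℝ 2 s U := hs.of_le (WithTop.coe_le_coe.2 le_top)
  have hFs : ∀ x ∈ U, ∀ μ i, DifferentiableAt ℝ (fun t => F μ i (t, s t, jet1 n m s t)) x :=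
    fun x hx μ i => differentiableAt_comp_jet1_prolongation
      ((hF μ i).differentiableOn (by simp)) hU hUsub hs2 hx
  constructor
  · intro hvar i x hx
    simpa [Pi.single_apply] using hvar (U ×ˢ univ) (hU.prod isOpen_univ) (prod_mono hUsub le_rfl)
      (fun _ => Pi.single i 1) contDiffOn_const (by simp) x hx ⟨hx, trivial⟩
  · intro hbal W hW _ ξ hξ hadm x hx hxW
    have hsx : DifferentiableAt ℝ s x :=
      (hs2.differentiableOn (by norm_num)).differentiableAt (hU.mem_nhds hx)
    have hξx : ∀ j, DifferentiableAt ℝ (fun P => ξ P j) (x, s x) := differentiableAt_pi.1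
      ((hξ.differentiableOn (by simp)).differentiableAt (hW.mem_nhds hxW))
    have hξs : ∀ j, DifferentiableAt ℝ (fun t => ξ (t, s t) j) x := fun j =>
      (hξx j).comp (f := fun t => (t, s t)) x (differentiableAt_fun_id.prodMk hsx)
    have hleibniz := weightedDiv_sum_mul (fun μ => Pi.single μ 1)
      (fun μ => fderiv ℝ (fun t => Real.log (g t)) x (Pi.single μ 1))
      (G := fun μ j t => F μ j (t, s t, jet1 n m s t)) hξs (fun μ j => hFs x hx μ j)
    simp only [weightedDiv, Finset.mul_sum] at hleibniz
    have hadm_x : ∑ μ, ∑ j, F μ j (x, s x, jet1 n m s x) *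
        fderiv ℝ (fun t => ξ (t, s t) j) x (Pi.single μ 1) = 0 := by
      simpa only [fderiv_comp_graph_apply_single hsx (hξx _)] using
        hadm (x, s x) hxW (jet1 n m s x)
    rw [hleibniz, hadm_x, zero_add]
    exact Finset.sum_congr rfl fun j _ => congrArg _ (hbal j x hx)

/-- (Poincaré–Cartan formulation of a balance system.)
With metric density `g > 0` (so `λ_G = log g`) and constitutive data
`F^μ_i, Π_i` on `U₀ × ℝ^m × ℝ^{m×(n+1)}`, a smooth section `s` on `U ⊆ U₀`
satisfies the weighted (variational) equations (1) for every `C`-admissible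
vertical variation `ξ` if and only if `s` solves the balance system (2). -/
theorem balance_system_poincare_cartan_formulation
    (n m : ℕ) (hm : 1 ≤ m)
    (U₀ : Set (Fin (n + 1) → ℝ)) (hU₀ : IsOpen U₀)
    (g : (Fin (n + 1) → ℝ) → ℝ)
    (hg : ContDiffOn ℝ (⊤ : ℕ∞) g U₀) (hgpos : ∀ x ∈ U₀, 0 < g x)
    (F : Fin (n + 1) → Fin m →
      ((Fin (n + 1) → ℝ) × (Fin m → ℝ) × (Fin m → Fin (n + 1) → ℝ)) → ℝ)
    (Psrc : Fin m →
      ((Fin (n + 1) → ℝ) × (Fin m → ℝ) × (Fin m → Fin (n + 1) → ℝ)) → ℝ)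
    (hF : ∀ μ i, ContDiffOn ℝ (⊤ : ℕ∞) (F μ i)
      (U₀ ×ˢ (Set.univ : Set ((Fin m → ℝ) × (Fin m → Fin (n + 1) → ℝ)))))
    (hPsrc : ∀ i, ContDiffOn ℝ (⊤ : ℕ∞) (Psrc i)
      (U₀ ×ˢ (Set.univ : Set ((Fin m → ℝ) × (Fin m → Fin (n + 1) → ℝ)))))
    (U : Set (Fin (n + 1) → ℝ)) (hU : IsOpen U) (hUsub : U ⊆ U₀)
    (s : (Fin (n + 1) → ℝ) → Fin m → ℝ) (hs : ContDiffOn ℝ (⊤ : ℕ∞) s U) :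
    -- (1) the variational equation holds for all C-admissible vertical variations
    (∀ Wv : Set ((Fin (n + 1) → ℝ) × (Fin m → ℝ)), IsOpen Wv →
      Wv ⊆ U₀ ×ˢ (Set.univ : Set (Fin m → ℝ)) →
      ∀ ξ : ((Fin (n + 1) → ℝ) × (Fin m → ℝ)) → Fin m → ℝ,
        ContDiffOn ℝ (⊤ : ℕ∞) ξ Wv →
        -- C-admissibility of the vertical variation ξ :
        (∀ P ∈ Wv, ∀ z : Fin m → Fin (n + 1) → ℝ,
          ∑ μ, ∑ i, F μ i (P.1, P.2, z) *
            (fderiv ℝ (fun Q => ξ Q i) P (Pi.single μ 1, 0)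
              + ∑ j, z j μ * fderiv ℝ (fun Q => ξ Q i) P (0, Pi.single j 1)) = 0) →
        ∀ x ∈ U, (x, s x) ∈ Wv →
          ∑ μ, fderiv ℝ
              (fun t => ∑ i, ξ (t, s t) i * F μ i (t, s t, jet1 n m s t)) x
              (Pi.single μ 1)
            + ∑ μ, ∑ i, fderiv ℝ (fun t => Real.log (g t)) x (Pi.single μ 1) *
                (ξ (x, s x) i * F μ i (x, s x, jet1 n m s x))
            = ∑ i, ξ (x, s x) i * Psrc i (x, s x, jet1 n m s x))
    ↔
    -- (2) s is a solution of the balance system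
    (∀ i, ∀ x ∈ U,
      ∑ μ, fderiv ℝ (fun t => F μ i (t, s t, jet1 n m s t)) x (Pi.single μ 1)
        + ∑ μ, fderiv ℝ (fun t => Real.log (g t)) x (Pi.single μ 1) *
            F μ i (x, s x, jet1 n m s x)
        = Psrc i (x, s x, jet1 n m s x)) :=
  balance_system_poincare_cartan_formulation_general n m U₀ g F Psrc hF U hU hUsub s hs
end

section
/- Fix integers n ≥ 0, m ≥ 1 and let U₀ ⊆ ℝ^{n+1} be open. On the jet space U₀ × ℝ^m × ℝ^{m×(n+1)} define the Cartan distribution Ca at a point P = (x, y, z) as the linear span of the n+1 vectors D_μ(z) = ( e_μ, (z^i_μ)_{i}, 0 ) (0 ≤ μ ≤ n, where e_μ is the μ-th standard basis vector of ℝ^{n+1}) together with all the coordinate vectors ∂_{z^i_μ}. Let a : U₀ → ℝ^{n+1} and b : U₀ × ℝ^m → ℝ^m be smooth, let ξ(x,y) = (a(x), b(x,y)), and let ξ¹ be the vector field on U₀ × ℝ^m × ℝ^{m×(n+1)} with components ( a(x), b(x,y), c(x,y,z) ), c^i_μ = ∂_{x^μ} b^i + Σ_j z^j_μ ∂_{y^j}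 b^i − Σ_ν z^i_ν ∂_{x^μ} a^ν. Then: (a) for every smooth vector field W on (an open subset of) U₀ × ℝ^m × ℝ^{m×(n+1)} with W(P) ∈ Ca(P) at every point P, the Lie bracket satisfies [ξ¹, W](P) ∈ Ca(P) at every point P (infinitesimal invariance of the Cartan distribution); (b) ξ¹ is the unique smooth vector field on U₀ × ℝ^m × ℝ^{m×(n+1)} whose first two blocks of components equal (a(x), b(x,y)) (i.e. which is projectable onto ξ) and which has property (a). -/
/-
A vector lies in the Cartan distribution at `P = (x, y, z)` iff the contact forms
`ω^i = dy^i - Σ_μ z^i_μ dx^μ` vanish on it. Differentiating `ω(W) = 0` for a field `W`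
tangent to the distribution, and using that `V` projects onto `ξ = (a, b)`, gives
  `ω^i([V, W]) = Σ_μ (V^i_μ - c^i_μ) W^μ`,
where `c` is the `z`-block of `ξ¹`. For `V = ξ¹` this vanishes, which is (a). Testing with
the total derivative field `W = D_μ`, whose `x`-block is `e_μ`, shows that (a) forces
`V^i_μ = c^i_μ`, which is (b).
-/

/-- Lie bracket of two vector fields on (an open subset of) a real normed
vector space: `[V, W](P) = DW(P)·V(P) − DV(P)·W(P)`. -/
noncomputable def VBr {E : Type*} [NormedAddCommGroup E] [NormedSpace ℝ E]
    (V W : E → E) : E → E :=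
  fun P => fderiv ℝ W P (V P) - fderiv ℝ V P (W P)

/-- The 1-jet prolongation `ξ¹` of the projectable vector field
`ξ(x,y) = (a(x), b(x,y))` on `ℝ^{n+1} × ℝ^m`. -/
noncomputable def prol (n m : ℕ)
    (a : (Fin (n + 1) → ℝ) → Fin (n + 1) → ℝ)
    (b : (Fin (n + 1) → ℝ) × (Fin m → ℝ) → Fin m → ℝ) :
    ((Fin (n + 1) → ℝ) × (Fin m → ℝ) × (Fin m → Fin (n + 1) → ℝ)) →
      ((Fin (n + 1) → ℝ) × (Fin m → ℝ) × (Fin m → Fin (n + 1) → ℝ)) :=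
  fun P =>
    (a P.1, b (P.1, P.2.1),
      fun i μ =>
        fderiv ℝ (fun q => b q i) (P.1, P.2.1) (Pi.single μ 1, 0)
          + ∑ j, P.2.2 j μ * fderiv ℝ (fun q => b q i) (P.1, P.2.1) (0, Pi.single j 1)
          - ∑ ν, P.2.2 i ν * fderiv ℝ (fun t => a t ν) P.1 (Pi.single μ 1))

/-- The Cartan distribution on the jet space `ℝ^{n+1} × ℝ^m × ℝ^{m×(n+1)}` at
a point `P = (x, y, z)`: the span of the total-derivative vectors
`D_μ(z) = (e_μ, (z^i_μ)_i, 0)` and the vertical vectors `∂_{z^i_μ}`. -/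
noncomputable def CaDist (n m : ℕ)
    (P : (Fin (n + 1) → ℝ) × (Fin m → ℝ) × (Fin m → Fin (n + 1) → ℝ)) :
    Submodule ℝ ((Fin (n + 1) → ℝ) × (Fin m → ℝ) × (Fin m → Fin (n + 1) → ℝ)) :=
  Submodule.span ℝ
    ((Set.range fun μ : Fin (n + 1) =>
        ((Pi.single μ 1 : Fin (n + 1) → ℝ),
          (fun i => P.2.2 i μ : Fin m → ℝ),
          (0 : Fin m → Fin (n + 1) → ℝ)))
      ∪ (Set.range fun pr : Fin m × Fin (n + 1) =>
        ((0 : Fin (n + 1) → ℝ), (0 : Fin m → ℝ),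
          (Pi.single pr.1 (Pi.single pr.2 1) : Fin m → Fin (n + 1) → ℝ))))

open Filter Topology

theorem map_fderiv_of_comp_eventuallyEq {𝕜 E F G H : Type*} [NontriviallyNormedField 𝕜]
    [NormedAddCommGroup E] [NormedSpace 𝕜 E] [NormedAddCommGroup F] [NormedSpace 𝕜 F]
    [NormedAddCommGroup G] [NormedSpace 𝕜 G] [NormedAddCommGroup H] [NormedSpace 𝕜 H]
    {π : F →L[𝕜] G} {L : E →L[𝕜] H} {V : E → F} {g : H → G} {x : E}
    (hV : DifferentiableAt 𝕜 V x) (hg : DifferentiableAt 𝕜 g (L x))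
    (hVg : π ∘ V =ᶠ[𝓝 x] g ∘ L) (w : E) :
    π (fderiv 𝕜 V x w) = fderiv 𝕜 g (L x) (L w) :=
  congrArg (· w) <| (π.hasFDerivAt.comp x hV.hasFDerivAt).unique <|
    (hg.hasFDerivAt.comp x L.hasFDerivAt).congr_of_eventuallyEq hVg

theorem fderiv_component_apply {𝕜 E ι : Type*} {F : ι → Type*} [NontriviallyNormedField 𝕜]
    [NormedAddCommGroup E] [NormedSpace 𝕜 E] [Fintype ι] [∀ i, NormedAddCommGroup (F i)]
    [∀ i, NormedSpace 𝕜 (F i)] {f : E → ∀ i, F i} {x : E} (hf : DifferentiableAt 𝕜 f x)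
    (i : ι) (v : E) : fderiv 𝕜 (fun y => f y i) x v = fderiv 𝕜 f x v i := by
  rw [(hasFDerivAt_pi'.1 hf.hasFDerivAt i).fderiv]
  rfl

theorem ContDiffAt.differentiableAt_fderiv_apply {𝕜 E F : Type*} [NontriviallyNormedField 𝕜]
    [NormedAddCommGroup E] [NormedSpace 𝕜 E] [NormedAddCommGroup F] [NormedSpace 𝕜 F]
    {f : E → F} {x : E} (hf : ContDiffAt 𝕜 2 f x) (v : E) :
    DifferentiableAt 𝕜 (fun y => fderiv 𝕜 f y v) x :=
  ((hf.fderiv_right (m := 1) le_rfl).differentiableAt one_ne_zero).clm_apply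
    (differentiableAt_const v)

abbrev JetSpace (n m : ℕ) :=
  (Fin (n + 1) → ℝ) × (Fin m → ℝ) × (Fin m → Fin (n + 1) → ℝ)

section

variable {n m : ℕ}

def contactForm (z : Fin m → Fin (n + 1) → ℝ) : JetSpace n m →ₗ[ℝ] Fin m → ℝ where
  toFun v i := v.2.1 i - ∑ μ, z i μ * v.1 μ
  map_add' v w := by
    ext i
    simp only [Prod.fst_add, Prod.snd_add, Pi.add_apply, mul_add, Finset.sum_add_distrib]
    ring
  map_smul' c v := by
    ext i
    simp only [Prod.smul_fst, Prod.smul_snd, Pi.smul_apply, smul_eq_mul, RingHom.id_apply,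
      mul_sub, Finset.mul_sum, mul_left_comm]

theorem contactForm_apply (z : Fin m → Fin (n + 1) → ℝ) (v : JetSpace n m) (i : Fin m) :
    contactForm z v i = v.2.1 i - ∑ μ, z i μ * v.1 μ := rfl

theorem CaDist_eq_ker (P : JetSpace n m) :
    CaDist n m P = LinearMap.ker (contactForm P.2.2) := by
  apply le_antisymm
  · rw [CaDist, Submodule.span_le]
    rintro _ (⟨μ, rfl⟩ | ⟨⟨i, μ⟩, rfl⟩)
    all_goals ext; simp [contactForm_apply, Pi.single_apply]
  · intro v hv
    have hy (i : Fin m) : v.2.1 i = ∑ μ, P.2.2 i μ * v.1 μ := sub_eq_zero.1 (congrFun hv i)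
    rw [CaDist, Submodule.span_union, Submodule.mem_sup]
    refine ⟨(v.1, v.2.1, 0), ?_, (0, 0, v.2.2), ?_, by simp⟩
    · refine (Submodule.mem_span_range_iff_exists_fun ℝ).2 ⟨v.1, ?_⟩
      ext μ <;> simp [Prod.fst_sum, Prod.snd_sum, Finset.sum_apply, Pi.single_apply, hy, mul_comm]
    · refine (Submodule.mem_span_range_iff_exists_fun ℝ).2 ⟨fun p => v.2.2 p.1 p.2, ?_⟩
      ext i μ <;> simp [Prod.fst_sum, Prod.snd_sum, Finset.sum_apply, Pi.single_apply,
        Fintype.sum_prod_type, ite_apply]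

theorem contactForm_fderiv_of_eventually_mem_CaDist {W : JetSpace n m → JetSpace n m}
    {P : JetSpace n m} (hW : DifferentiableAt ℝ W P)
    (hWCa : ∀ᶠ Q in 𝓝 P, W Q ∈ CaDist n m Q) (h : JetSpace n m) :
    contactForm P.2.2 (fderiv ℝ W P h) = fun i => ∑ μ, h.2.2 i μ * (W P).1 μ := by
  ext i
  have hz (μ : Fin (n + 1)) := hasFDerivAt_pi'.1 (hasFDerivAt_pi'.1
    (hasFDerivAt_id (𝕜 := ℝ) P).snd.snd i) μ
  have hx (μ : Fin (n + 1)) := hasFDerivAt_pi'.1 hW.hasFDerivAt.fst μ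
  have hy := hasFDerivAt_pi'.1 hW.hasFDerivAt.snd.fst i
  have hderiv : HasFDerivAt (fun Q : JetSpace n m => contactForm Q.2.2 (W Q) i) _ P :=
    hy.sub (HasFDerivAt.fun_sum (u := Finset.univ) fun μ _ => (hz μ).mul (hx μ))
  have hderiv_zero : HasFDerivAt (fun Q : JetSpace n m => contactForm Q.2.2 (W Q) i)
      (0 : JetSpace n m →L[ℝ] ℝ) P :=
    (hasFDerivAt_const (0 : ℝ) P).congr_of_eventuallyEq <| hWCa.mono fun Q hQ => by
      rw [CaDist_eq_ker] at hQ
      exact congrFun hQ i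
  have := congrArg (· h) (hderiv.unique hderiv_zero)
  simp only [id_eq, ContinuousLinearMap.comp_id, sub_apply,
    ContinuousLinearMap.comp_apply, ContinuousLinearMap.coe_snd', ContinuousLinearMap.coe_fst',
    ContinuousLinearMap.proj_apply, sum_apply, add_apply,
    smul_apply, smul_eq_mul, zero_apply] at this
  rw [Finset.sum_add_distrib] at this
  simp only [mul_comm ((W P).1 _)] at this
  rw [contactForm_apply]
  linarith

variable {a : (Fin (n + 1) → ℝ) → Fin (n + 1) → ℝ}
  {b : (Fin (n + 1) → ℝ) × (Fin m → ℝ) → Fin m → ℝ}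

theorem prol_snd_snd {P : JetSpace n m} (ha : DifferentiableAt ℝ a P.1)
    (hb : DifferentiableAt ℝ b (P.1, P.2.1)) (i : Fin m) (μ : Fin (n + 1)) :
    (prol n m a b P).2.2 i μ = fderiv ℝ b (P.1, P.2.1) (Pi.single μ 1, fun j => P.2.2 j μ) i
      - ∑ ν, P.2.2 i ν * fderiv ℝ a P.1 (Pi.single μ 1) ν := by
  have hsplit : ((Pi.single μ 1, fun j => P.2.2 j μ) : (Fin (n + 1) → ℝ) × (Fin m → ℝ)) =
      (Pi.single μ 1, 0) + ∑ j, P.2.2 j μ • (0, Pi.single j 1) := by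
    ext k <;> simp [Prod.fst_sum, Prod.snd_sum, Finset.sum_apply, Pi.single_apply]
  simp only [prol, fderiv_component_apply ha, fderiv_component_apply hb, hsplit, map_add,
    map_sum, map_smul, Pi.add_apply, Finset.sum_apply, Pi.smul_apply, smul_eq_mul]

theorem contactForm_fderiv_of_projectable {V : JetSpace n m → JetSpace n m} {P : JetSpace n m}
    (hV : DifferentiableAt ℝ V P) (ha : DifferentiableAt ℝ a P.1)
    (hb : DifferentiableAt ℝ b (P.1, P.2.1))
    (hproj : ∀ᶠ Q in 𝓝 P, (V Q).1 = a Q.1 ∧ (V Q).2.1 = b (Q.1, Q.2.1))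
    {w : JetSpace n m} (hw : w ∈ CaDist n m P) :
    contactForm P.2.2 (fderiv ℝ V P w) = fun i => ∑ μ, (prol n m a b P).2.2 i μ * w.1 μ := by
  have hx : (fderiv ℝ V P w).1 = fderiv ℝ a P.1 w.1 := by
    refine map_fderiv_of_comp_eventuallyEq (π := .fst ℝ _ _) (L := .fst ℝ _ _) hV ha ?_ w
    exact hproj.mono fun _ hQ => hQ.1
  have hy : (fderiv ℝ V P w).2.1 = fderiv ℝ b (P.1, P.2.1) (w.1, w.2.1) := by
    refine map_fderiv_of_comp_eventuallyEq (π := .comp (.fst ℝ _ _) (.snd ℝ _ _))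
      (L := .prod (.fst ℝ _ _) (.comp (.fst ℝ _ _) (.snd ℝ _ _))) hV hb ?_ w
    exact hproj.mono fun _ hQ => hQ.2
  rw [CaDist_eq_ker] at hw
  have hw1 : w.1 = ∑ μ, w.1 μ • Pi.single μ 1 := by
    ext ν; simp [Finset.sum_apply, Pi.single_apply]
  have hw12 : ((w.1, w.2.1) : (Fin (n + 1) → ℝ) × (Fin m → ℝ)) =
      ∑ μ, w.1 μ • (Pi.single μ 1, fun j => P.2.2 j μ) := by
    ext k
    · simp [Prod.fst_sum, Finset.sum_apply, Pi.single_apply]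
    · simp [Prod.snd_sum, Finset.sum_apply, sub_eq_zero.1 (congrFun hw k), mul_comm]
  have hDa : fderiv ℝ a P.1 w.1 = ∑ μ, w.1 μ • fderiv ℝ a P.1 (Pi.single μ 1) := by
    conv_lhs => rw [hw1]
    simp only [map_sum, map_smul]
  ext i
  simp only [contactForm_apply, hx, hy, prol_snd_snd ha hb, hw12, hDa, map_sum, map_smul,
    Finset.sum_apply, Pi.smul_apply, smul_eq_mul, Finset.mul_sum, sub_mul, Finset.sum_mul,
    Finset.sum_sub_distrib]
  rw [Finset.sum_comm (γ := Fin (n + 1))]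
  congr 1
  · exact Finset.sum_congr rfl fun _ _ => mul_comm _ _
  · exact Finset.sum_congr rfl fun _ _ => Finset.sum_congr rfl fun _ _ => by ring

theorem contactForm_VBr {V W : JetSpace n m → JetSpace n m} {P : JetSpace n m}
    (hV : DifferentiableAt ℝ V P) (hW : DifferentiableAt ℝ W P)
    (ha : DifferentiableAt ℝ a P.1) (hb : DifferentiableAt ℝ b (P.1, P.2.1))
    (hproj : ∀ᶠ Q in 𝓝 P, (V Q).1 = a Q.1 ∧ (V Q).2.1 = b (Q.1, Q.2.1))
    (hWCa : ∀ᶠ Q in 𝓝 P, W Q ∈ CaDist n m Q) :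
    contactForm P.2.2 (VBr V W P) =
      fun i => ∑ μ, ((V P).2.2 i μ - (prol n m a b P).2.2 i μ) * (W P).1 μ := by
  rw [VBr, map_sub, contactForm_fderiv_of_eventually_mem_CaDist hW hWCa,
    contactForm_fderiv_of_projectable hV ha hb hproj hWCa.self_of_nhds]
  ext i
  simp only [Pi.sub_apply, sub_mul, Finset.sum_sub_distrib]

theorem differentiableAt_prol {P : JetSpace n m} (ha : ContDiffAt ℝ 2 a P.1)
    (hb : ContDiffAt ℝ 2 b (P.1, P.2.1)) : DifferentiableAt ℝ (prol n m a b) P := by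
  have hxy : DifferentiableAt ℝ (fun Q : JetSpace n m => (Q.1, Q.2.1)) P := by fun_prop
  have hDa (ν : Fin (n + 1)) (v : Fin (n + 1) → ℝ) :
      DifferentiableAt ℝ (fun Q : JetSpace n m => fderiv ℝ (fun t => a t ν) Q.1 v) P :=
    ((contDiffAt_pi.1 ha ν).differentiableAt_fderiv_apply v).comp P differentiableAt_fst
  have hDb (i : Fin m) (v : (Fin (n + 1) → ℝ) × (Fin m → ℝ)) :
      DifferentiableAt ℝ (fun Q : JetSpace n m => fderiv ℝ (fun q => b q i) (Q.1, Q.2.1) v) P :=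
    (((contDiffAt_pi.1 hb i).differentiableAt_fderiv_apply v).comp P hxy :)
  refine ((ha.differentiableAt two_ne_zero).comp P differentiableAt_fst).prodMk <|
    ((hb.differentiableAt two_ne_zero).comp P hxy).prodMk ?_
  refine differentiableAt_pi.2 fun i => differentiableAt_pi.2 fun μ => ?_
  fun_prop

def totalDeriv (μ : Fin (n + 1)) (P : JetSpace n m) : JetSpace n m :=
  (Pi.single μ 1, fun i => P.2.2 i μ, 0)

theorem totalDeriv_mem_CaDist (μ : Fin (n + 1)) (P : JetSpace n m) :
    totalDeriv μ P ∈ CaDist n m P :=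
  Submodule.subset_span (Or.inl ⟨μ, rfl⟩)

theorem contDiff_totalDeriv {k : WithTop ℕ∞} (μ : Fin (n + 1)) :
    ContDiff ℝ k (totalDeriv μ : JetSpace n m → JetSpace n m) := by
  unfold totalDeriv
  fun_prop

end

theorem prolongation_preserves_cartan_distribution_and_unique_general
    (n m : ℕ)
    (U₀ : Set (Fin (n + 1) → ℝ)) (hU₀ : IsOpen U₀)
    (a : (Fin (n + 1) → ℝ) → Fin (n + 1) → ℝ)
    (b : (Fin (n + 1) → ℝ) × (Fin m → ℝ) → Fin m → ℝ)
    (ha : ContDiffOn ℝ (⊤ : ℕ∞) a U₀)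
    (hb : ContDiffOn ℝ (⊤ : ℕ∞) b (U₀ ×ˢ (Set.univ : Set (Fin m → ℝ)))) :
    -- (a) infinitesimal invariance of the Cartan distribution
    (∀ Ω : Set ((Fin (n + 1) → ℝ) × (Fin m → ℝ) × (Fin m → Fin (n + 1) → ℝ)),
      IsOpen Ω →
      ∀ W : ((Fin (n + 1) → ℝ) × (Fin m → ℝ) × (Fin m → Fin (n + 1) → ℝ)) →
          ((Fin (n + 1) → ℝ) × (Fin m → ℝ) × (Fin m → Fin (n + 1) → ℝ)),
        ContDiffOn ℝ (⊤ : ℕ∞) W Ω →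
        (∀ P ∈ Ω, W P ∈ CaDist n m P) →
        ∀ P ∈ Ω, P.1 ∈ U₀ → VBr (prol n m a b) W P ∈ CaDist n m P)
    ∧
    -- (b) uniqueness among smooth vector fields projectable onto ξ = (a, b)
    (∀ V : ((Fin (n + 1) → ℝ) × (Fin m → ℝ) × (Fin m → Fin (n + 1) → ℝ)) →
        ((Fin (n + 1) → ℝ) × (Fin m → ℝ) × (Fin m → Fin (n + 1) → ℝ)),
      ContDiffOn ℝ (⊤ : ℕ∞) V
        (U₀ ×ˢ (Set.univ : Set ((Fin m → ℝ) × (Fin m → Fin (n + 1) → ℝ)))) →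
      (∀ P : (Fin (n + 1) → ℝ) × (Fin m → ℝ) × (Fin m → Fin (n + 1) → ℝ),
        P.1 ∈ U₀ → (V P).1 = a P.1 ∧ (V P).2.1 = b (P.1, P.2.1)) →
      (∀ Ω : Set ((Fin (n + 1) → ℝ) × (Fin m → ℝ) × (Fin m → Fin (n + 1) → ℝ)),
        IsOpen Ω →
        ∀ W : ((Fin (n + 1) → ℝ) × (Fin m → ℝ) × (Fin m → Fin (n + 1) → ℝ)) →
            ((Fin (n + 1) → ℝ) × (Fin m → ℝ) × (Fin m → Fin (n + 1) → ℝ)),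
          ContDiffOn ℝ (⊤ : ℕ∞) W Ω →
          (∀ P ∈ Ω, W P ∈ CaDist n m P) →
          ∀ P ∈ Ω, P.1 ∈ U₀ → VBr V W P ∈ CaDist n m P) →
      ∀ P : (Fin (n + 1) → ℝ) × (Fin m → ℝ) × (Fin m → Fin (n + 1) → ℝ),
        P.1 ∈ U₀ → V P = prol n m a b P) := by
  have hsmooth {P : JetSpace n m} (hPU : P.1 ∈ U₀) :
      ContDiffAt ℝ 2 a P.1 ∧ ContDiffAt ℝ 2 b (P.1, P.2.1) :=
    ⟨(ha.contDiffAt (hU₀.mem_nhds hPU)).of_le (by norm_cast),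
      (hb.contDiffAt ((hU₀.prod isOpen_univ).mem_nhds ⟨hPU, trivial⟩)).of_le
        (by norm_cast)⟩
  refine ⟨fun Ω hΩ W hW hWCa P hP hPU => ?_, fun V hV hproj hinv P hPU => ?_⟩
  · obtain ⟨ha2, hb2⟩ := hsmooth hPU
    rw [CaDist_eq_ker, LinearMap.mem_ker, contactForm_VBr (differentiableAt_prol ha2 hb2)
      ((hW.contDiffAt (hΩ.mem_nhds hP)).differentiableAt (by simp))
      (ha2.differentiableAt two_ne_zero) (hb2.differentiableAt two_ne_zero)
      (.of_forall fun _ => ⟨rfl, rfl⟩) (eventually_of_mem (hΩ.mem_nhds hP) hWCa)]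
    exact funext fun i => by simp
  · obtain ⟨ha2, hb2⟩ := hsmooth hPU
    refine Prod.ext (hproj P hPU).1 (Prod.ext (hproj P hPU).2 ?_)
    ext i μ
    have h := hinv _ isOpen_univ (totalDeriv μ) (contDiff_totalDeriv μ).contDiffOn
      (fun Q _ => totalDeriv_mem_CaDist μ Q) P trivial hPU
    rw [CaDist_eq_ker, LinearMap.mem_ker, contactForm_VBr
      ((hV.contDiffAt ((hU₀.prod isOpen_univ).mem_nhds ⟨hPU, trivial⟩)).differentiableAt
        (by simp))
      ((contDiff_totalDeriv (k := 1) μ).differentiable one_ne_zero P)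
      (ha2.differentiableAt two_ne_zero) (hb2.differentiableAt two_ne_zero)
      (eventually_of_mem ((hU₀.preimage continuous_fst).mem_nhds hPU) hproj)
      (.of_forall (totalDeriv_mem_CaDist μ))] at h
    simpa [totalDeriv, Pi.single_apply, sub_eq_zero] using congrFun h i

/-- (a) The prolongation `ξ¹` of a projectable vector field
`ξ = (a, b)` infinitesimally preserves the Cartan distribution: its bracket
with any smooth vector field lying in the Cartan distribution again lies in
the Cartan distribution. (b) `ξ¹` is the unique smooth vector field
projecting onto `ξ` with property (a). -/
theorem prolongation_preserves_cartan_distribution_and_unique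
    (n m : ℕ) (hm : 1 ≤ m)
    (U₀ : Set (Fin (n + 1) → ℝ)) (hU₀ : IsOpen U₀)
    (a : (Fin (n + 1) → ℝ) → Fin (n + 1) → ℝ)
    (b : (Fin (n + 1) → ℝ) × (Fin m → ℝ) → Fin m → ℝ)
    (ha : ContDiffOn ℝ (⊤ : ℕ∞) a U₀)
    (hb : ContDiffOn ℝ (⊤ : ℕ∞) b (U₀ ×ˢ (Set.univ : Set (Fin m → ℝ)))) :
    -- (a) infinitesimal invariance of the Cartan distribution
    (∀ Ω : Set ((Fin (n + 1) → ℝ) × (Fin m → ℝ) × (Fin m → Fin (n + 1) → ℝ)),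
      IsOpen Ω →
      ∀ W : ((Fin (n + 1) → ℝ) × (Fin m → ℝ) × (Fin m → Fin (n + 1) → ℝ)) →
          ((Fin (n + 1) → ℝ) × (Fin m → ℝ) × (Fin m → Fin (n + 1) → ℝ)),
        ContDiffOn ℝ (⊤ : ℕ∞) W Ω →
        (∀ P ∈ Ω, W P ∈ CaDist n m P) →
        ∀ P ∈ Ω, P.1 ∈ U₀ → VBr (prol n m a b) W P ∈ CaDist n m P)
    ∧
    -- (b) uniqueness among smooth vector fields projectable onto ξ = (a, b)
    (∀ V : ((Fin (n + 1) → ℝ) × (Fin m → ℝ) × (Fin m → Fin (n + 1) → ℝ)) →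
        ((Fin (n + 1) → ℝ) × (Fin m → ℝ) × (Fin m → Fin (n + 1) → ℝ)),
      ContDiffOn ℝ (⊤ : ℕ∞) V
        (U₀ ×ˢ (Set.univ : Set ((Fin m → ℝ) × (Fin m → Fin (n + 1) → ℝ)))) →
      (∀ P : (Fin (n + 1) → ℝ) × (Fin m → ℝ) × (Fin m → Fin (n + 1) → ℝ),
        P.1 ∈ U₀ → (V P).1 = a P.1 ∧ (V P).2.1 = b (P.1, P.2.1)) →
      (∀ Ω : Set ((Fin (n + 1) → ℝ) × (Fin m → ℝ) × (Fin m → Fin (n + 1) → ℝ)),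
        IsOpen Ω →
        ∀ W : ((Fin (n + 1) → ℝ) × (Fin m → ℝ) × (Fin m → Fin (n + 1) → ℝ)) →
            ((Fin (n + 1) → ℝ) × (Fin m → ℝ) × (Fin m → Fin (n + 1) → ℝ)),
          ContDiffOn ℝ (⊤ : ℕ∞) W Ω →
          (∀ P ∈ Ω, W P ∈ CaDist n m P) →
          ∀ P ∈ Ω, P.1 ∈ U₀ → VBr V W P ∈ CaDist n m P) →
      ∀ P : (Fin (n + 1) → ℝ) × (Fin m → ℝ) × (Fin m → Fin (n + 1) → ℝ),
        P.1 ∈ U₀ → V P = prol n m a b P) :=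
  prolongation_preserves_cartan_distribution_and_unique_general n m U₀ hU₀ a b ha hb
end

section
/- Fix integers k ≥ 1, l ≥ 0, m ≥ 1 and write points of ℝ^{k+l} as x = (x′, x″) ∈ ℝ^k × ℝ^l. On the partial jet space ℝ^{k+l} × ℝ^m × ℝ^{m×k} (jet coordinates z^i_ν, 1 ≤ i ≤ m, 1 ≤ ν ≤ k) define the partial Cartan distribution Ca_K at a point P = (x, y, z) as the linear span of the vectors D_ν(z) = ∂_{x′^ν} + Σ_i z^i_ν ∂_{y^i} (1 ≤ ν ≤ k), ∂_{x″^σ} (1 ≤ σ ≤ l), and ∂_{z^i_ν} (all i, ν). Let a′ : ℝ^k → ℝ^k, a″ : ℝ^l → ℝ^l and b : ℝ^k × ℝ^m → ℝ^m be smooth, and let ξ be the vector field on ℝ^{k+l} × ℝ^m with components ( a′(x′), a″(x″), b(x′, y) ). Define ξ¹ on ℝ^{k+l} × ℝ^m × ℝ^{m×k} by adjoining the z-components c^i_ν(x′, y, z) = ∂_{x′^ν} b^i(x′,y) + Σ_j z^j_ν ∂_{y^j} b^i(x′,y) − Σ_{ν₁=1}^{k} z^i_{ν₁} ∂_{x′^ν}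 a′^{ν₁}(x′). Then: (a) for every smooth vector field W on (an open subset of) ℝ^{k+l} × ℝ^m × ℝ^{m×k} with W(P) ∈ Ca_K(P) at every point P, the Lie bracket satisfies [ξ¹, W](P) ∈ Ca_K(P) at every point P; (b) ξ¹ is the unique smooth vector field with this property whose first blocks of components equal ( a′(x′), a″(x″), b(x′, y) ). -/
/-- The partial Cartan distribution `Ca_K` on the partial jet space
`ℝ^{k+l} × ℝ^m × ℝ^{m×k}` at `P = ((x′,x″), y, z)`: span of
`D_ν = ∂_{x′^ν} + Σ_i z^i_ν ∂_{y^i}` (1 ≤ ν ≤ k), `∂_{x″^σ}` (1 ≤ σ ≤ l), and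
all `∂_{z^i_ν}`. -/
noncomputable def CaK (k l m : ℕ)
    (P : ((Fin k → ℝ) × (Fin l → ℝ)) × (Fin m → ℝ) × (Fin m → Fin k → ℝ)) :
    Submodule ℝ (((Fin k → ℝ) × (Fin l → ℝ)) × (Fin m → ℝ) × (Fin m → Fin k → ℝ)) :=
  Submodule.span ℝ
    ((Set.range fun ν : Fin k =>
        ((((Pi.single ν 1 : Fin k → ℝ), (0 : Fin l → ℝ)),
          (fun i => P.2.2 i ν : Fin m → ℝ), (0 : Fin m → Fin k → ℝ)) :
          ((Fin k → ℝ) × (Fin l → ℝ)) × (Fin m → ℝ) × (Fin m → Fin k → ℝ)))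
      ∪ (Set.range fun σ : Fin l =>
        ((((0 : Fin k → ℝ), (Pi.single σ 1 : Fin l → ℝ)),
          (0 : Fin m → ℝ), (0 : Fin m → Fin k → ℝ)) :
          ((Fin k → ℝ) × (Fin l → ℝ)) × (Fin m → ℝ) × (Fin m → Fin k → ℝ)))
      ∪ (Set.range fun pr : Fin m × Fin k =>
        ((((0 : Fin k → ℝ), (0 : Fin l → ℝ)), (0 : Fin m → ℝ),
          (Pi.single pr.1 (Pi.single pr.2 1) : Fin m → Fin k → ℝ)) :
          ((Fin k → ℝ) × (Fin l → ℝ)) × (Fin m → ℝ) × (Fin m → Fin k → ℝ))))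

/-- Prolongation of the adapted vector field `ξ = (a′(x′), a″(x″), b(x′,y))`
to the partial jet space, with jet components
`c^i_ν = ∂_{x′^ν} b^i + Σ_j z^j_ν ∂_{y^j} b^i − Σ_{ν₁} z^i_{ν₁} ∂_{x′^ν} a′^{ν₁}`. -/
noncomputable def prolK (k l m : ℕ)
    (a' : (Fin k → ℝ) → Fin k → ℝ) (a'' : (Fin l → ℝ) → Fin l → ℝ)
    (b : (Fin k → ℝ) × (Fin m → ℝ) → Fin m → ℝ) :
    (((Fin k → ℝ) × (Fin l → ℝ)) × (Fin m → ℝ) × (Fin m → Fin k → ℝ)) →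
      (((Fin k → ℝ) × (Fin l → ℝ)) × (Fin m → ℝ) × (Fin m → Fin k → ℝ)) :=
  fun P =>
    ((a' P.1.1, a'' P.1.2), b (P.1.1, P.2.1),
      fun i ν =>
        fderiv ℝ (fun q => b q i) (P.1.1, P.2.1) (Pi.single ν 1, 0)
          + ∑ j, P.2.2 j ν * fderiv ℝ (fun q => b q i) (P.1.1, P.2.1) (0, Pi.single j 1)
          - ∑ ν₁, P.2.2 i ν₁ * fderiv ℝ (fun t => a' t ν₁) P.1.1 (Pi.single ν 1))

/-! Write `ω_K(v) = v_y − z·v_{x′}` for the partial contact form at `P = (x, y, z)`, so that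
`Ca_K(P) = ker ω_K`. For a field `V = (a′(x′), a″, b(x′, y), V_z)` and a field `W` tangent to
`Ca_K`, differentiate the identity `W_y = z·W_{x′}` along `V`. Together with the chain rule for
`DV_{x′} = Da′` and `DV_y = Db`, this gives
`ω_K([V, W]) = V_z·W_{x′} − (Db(W_{x′}, z·W_{x′}) − z·Da′(W_{x′})) = (V_z − c)·W_{x′}`,
where `c` is the jet component of `ξ¹`. So the defect vanishes for `V = ξ¹`. Conversely,
testing against the total derivatives `D_ν`, whose `x′`-component is `e_ν`, shows that `V_z`
and `c` agree column by column. -/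

open Matrix Topology

abbrev PartialJet (k l m : ℕ) :=
  ((Fin k → ℝ) × (Fin l → ℝ)) × (Fin m → ℝ) × (Fin m → Fin k → ℝ)

namespace PartialJet

variable {k l m : ℕ} {a' : (Fin k → ℝ) → Fin k → ℝ} {a'' : (Fin l → ℝ) → Fin l → ℝ}
  {b : (Fin k → ℝ) × (Fin m → ℝ) → Fin m → ℝ}

def contactForm (P : PartialJet k l m) : PartialJet k l m →ₗ[ℝ] Fin m → ℝ :=
  LinearMap.fst ℝ _ _ ∘ₗ LinearMap.snd ℝ _ _ -
    mulVecLin P.2.2 ∘ₗ LinearMap.fst ℝ _ _ ∘ₗ LinearMap.fst ℝ _ _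

theorem contactForm_apply (P v : PartialJet k l m) :
    contactForm P v = v.2.1 - P.2.2 *ᵥ v.1.1 :=
  rfl

theorem CaK_eq_ker_contactForm (P : PartialJet k l m) :
    CaK k l m P = LinearMap.ker (contactForm P) := by
  apply le_antisymm
  · rw [CaK, Submodule.span_le]
    rintro w ((⟨ν, rfl⟩ | ⟨σ, rfl⟩) | ⟨pr, rfl⟩) <;>
      ext i <;> simp [contactForm_apply, mulVec, dotProduct, Pi.single_apply]
  · intro v hv
    have hy : v.2.1 = P.2.2 *ᵥ v.1.1 := sub_eq_zero.1 hv
    have hrepr : v =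
        (∑ ν, v.1.1 ν • ((((Pi.single ν 1 : Fin k → ℝ), (0 : Fin l → ℝ)),
          (fun i => P.2.2 i ν : Fin m → ℝ), (0 : Fin m → Fin k → ℝ)) : PartialJet k l m))
        + (∑ σ, v.1.2 σ • ((((0 : Fin k → ℝ), (Pi.single σ 1 : Fin l → ℝ)),
          (0 : Fin m → ℝ), (0 : Fin m → Fin k → ℝ)) : PartialJet k l m))
        + (∑ pr : Fin m × Fin k, v.2.2 pr.1 pr.2 •
            ((((0 : Fin k → ℝ), (0 : Fin l → ℝ)), (0 : Fin m → ℝ),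
            (Pi.single pr.1 (Pi.single pr.2 1) : Fin m → Fin k → ℝ)) : PartialJet k l m)) := by
      refine Prod.ext (Prod.ext ?_ ?_) (Prod.ext ?_ ?_) <;> ext <;>
        simp [Prod.fst_sum, Prod.snd_sum, Pi.single_apply, Fintype.sum_prod_type, hy, mulVec,
          dotProduct, mul_comm]
    rw [hrepr]
    refine add_mem (add_mem ?_ ?_) ?_ <;>
      refine Submodule.sum_mem _ fun x _ => Submodule.smul_mem _ _ (Submodule.subset_span ?_)
    · exact Or.inl (Or.inl ⟨x, rfl⟩)
    · exact Or.inl (Or.inr ⟨x, rfl⟩)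
    · exact Or.inr ⟨x, rfl⟩

theorem mem_CaK_iff (P v : PartialJet k l m) : v ∈ CaK k l m P ↔ v.2.1 = P.2.2 *ᵥ v.1.1 := by
  rw [CaK_eq_ker_contactForm, LinearMap.mem_ker, contactForm_apply, sub_eq_zero]

theorem fderiv_snd_fst_eq_of_eventually_mem_CaK {W : PartialJet k l m → PartialJet k l m}
    {P : PartialJet k l m} (hW : DifferentiableAt ℝ W P) (hWC : ∀ᶠ Q in 𝓝 P, W Q ∈ CaK k l m Q)
    (h : PartialJet k l m) :
    (fderiv ℝ W P h).2.1 = P.2.2 *ᵥ (fderiv ℝ W P h).1.1 + h.2.2 *ᵥ (W P).1.1 := by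
  ext i
  have hWd := hW.hasFDerivAt
  have hy := hasFDerivAt_pi'.1 hWd.snd.fst i
  have hx := hasFDerivAt_pi'.1 hWd.fst.fst
  have hzi : HasFDerivAt (fun Q : PartialJet k l m => Q.2.2 i) _ P :=
    hasFDerivAt_pi'.1 (hasFDerivAt_id (𝕜 := ℝ) P).snd.snd i
  have hz := hasFDerivAt_pi'.1 hzi
  have hconstraint : HasFDerivAt (fun Q => (W Q).2.1 i - ∑ ν, Q.2.2 i ν * (W Q).1.1 ν) _ P :=
    hy.sub (HasFDerivAt.fun_sum fun ν _ => (hz ν).mul (hx ν))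
  have hconstraint_zero : HasFDerivAt (fun Q => (W Q).2.1 i - ∑ ν, Q.2.2 i ν * (W Q).1.1 ν)
      (0 : PartialJet k l m →L[ℝ] ℝ) P := by
    refine (hasFDerivAt_const (0 : ℝ) P).congr_of_eventuallyEq ?_
    filter_upwards [hWC] with Q hQ
    rw [mem_CaK_iff] at hQ
    simp only [hQ, mulVec, dotProduct, sub_self]
  have := congrArg (· h) (hconstraint.unique hconstraint_zero)
  simp only [ContinuousLinearMap.comp_id, _root_.sub_apply, ContinuousLinearMap.comp_apply,
    ContinuousLinearMap.coe_snd', ContinuousLinearMap.coe_fst', ContinuousLinearMap.proj_apply,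
    _root_.sum_apply, _root_.add_apply, _root_.smul_apply, smul_eq_mul, _root_.zero_apply,
    sub_eq_zero, Finset.sum_add_distrib] at this
  simp only [Pi.add_apply, mulVec, dotProduct]
  simpa only [mul_comm ((W P).1.1 _)] using this

theorem prolK_snd_snd_mulVec {P : PartialJet k l m}
    (ha' : DifferentiableAt ℝ a' P.1.1) (hb : DifferentiableAt ℝ b (P.1.1, P.2.1))
    (u : Fin k → ℝ) :
    (prolK k l m a' a'' b P).2.2 *ᵥ u =
      fderiv ℝ b (P.1.1, P.2.1) (u, P.2.2 *ᵥ u) - P.2.2 *ᵥ fderiv ℝ a' P.1.1 u := by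
  set Db := fderiv ℝ b (P.1.1, P.2.1)
  set Da := fderiv ℝ a' P.1.1
  let C : (Fin k → ℝ) →ₗ[ℝ] Fin m → ℝ :=
    Db.toLinearMap ∘ₗ LinearMap.id.prod (mulVecLin P.2.2) - mulVecLin P.2.2 ∘ₗ Da.toLinearMap
  suffices (prolK k l m a' a'' b P).2.2 = LinearMap.toMatrix' C by
    rw [this, LinearMap.toMatrix'_mulVec]; rfl
  ext i ν
  have hDb (v) : fderiv ℝ (fun q => b q i) (P.1.1, P.2.1) v = Db v i := by
    rw [(hasFDerivAt_pi'.1 hb.hasFDerivAt i).fderiv]; rfl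
  have hDa (ν₁) (v) : fderiv ℝ (fun t => a' t ν₁) P.1.1 v = Da v ν₁ := by
    rw [(hasFDerivAt_pi'.1 ha'.hasFDerivAt ν₁).fderiv]; rfl
  have hDb_snd (w : Fin m → ℝ) : Db (0, w) i = ∑ j, w j * Db (0, Pi.single j 1) i := by
    have := congrFun (LinearMap.toMatrix'_mulVec (Db.toLinearMap ∘ₗ LinearMap.inr ℝ _ _) w) i
    simpa [mulVec, dotProduct, LinearMap.toMatrix'_apply, mul_comm] using this.symm
  have hsplit : Db (Pi.single ν 1, P.2.2 *ᵥ Pi.single ν 1) =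
      Db (Pi.single ν 1, 0) + Db (0, fun j => P.2.2 j ν) := by
    rw [← map_add]; congr 1; ext <;> simp [mulVec, dotProduct, Pi.single_apply]
  rw [LinearMap.toMatrix'_apply]
  show _ = Db (Pi.single ν 1, P.2.2 *ᵥ Pi.single ν 1) i - (P.2.2 *ᵥ Da (Pi.single ν 1)) i
  simp only [prolK, hDb, hDa]
  rw [hsplit, Pi.add_apply, hDb_snd]
  simp [mulVec, dotProduct]

theorem contactForm_VBr {V W : PartialJet k l m → PartialJet k l m} {P : PartialJet k l m}
    (hVx : ∀ Q, (V Q).1.1 = a' Q.1.1)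
    (hVy : ∀ Q, (V Q).2.1 = b (Q.1.1, Q.2.1)) (hV : DifferentiableAt ℝ V P)
    (ha' : DifferentiableAt ℝ a' P.1.1) (hb : DifferentiableAt ℝ b (P.1.1, P.2.1))
    (hW : DifferentiableAt ℝ W P) (hWC : ∀ᶠ Q in 𝓝 P, W Q ∈ CaK k l m Q) :
    contactForm P (VBr V W P) = (V P).2.2 *ᵥ (W P).1.1 -
      (fderiv ℝ b (P.1.1, P.2.1) ((W P).1.1, P.2.2 *ᵥ (W P).1.1) -
        P.2.2 *ᵥ fderiv ℝ a' P.1.1 (W P).1.1) := by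
  have hWP : (W P).2.1 = P.2.2 *ᵥ (W P).1.1 := (mem_CaK_iff P (W P)).1 hWC.self_of_nhds
  have hid := hasFDerivAt_id (𝕜 := ℝ) P
  have hDVx : (fderiv ℝ V P (W P)).1.1 = fderiv ℝ a' P.1.1 (W P).1.1 := by
    have h := hV.hasFDerivAt.fst.fst
    rw [show (fun Q => (V Q).1.1) = fun Q => a' Q.1.1 from funext hVx] at h
    exact congrArg (· (W P)) (h.unique (ha'.hasFDerivAt.comp P hid.fst.fst))
  have hDVy : (fderiv ℝ V P (W P)).2.1 = fderiv ℝ b (P.1.1, P.2.1) ((W P).1.1, (W P).2.1) := by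
    have h := hV.hasFDerivAt.snd.fst
    rw [show (fun Q => (V Q).2.1) = fun Q => b (Q.1.1, Q.2.1) from funext hVy] at h
    exact congrArg (· (W P)) (h.unique (hb.hasFDerivAt.comp P (hid.fst.fst.prodMk hid.snd.fst)))
  rw [contactForm_apply, VBr, Prod.snd_sub, Prod.fst_sub, Prod.fst_sub, Prod.fst_sub, hDVx, hDVy,
    fderiv_snd_fst_eq_of_eventually_mem_CaK hW hWC, hWP]
  ext i
  simp only [Pi.sub_apply, Pi.add_apply, mulVec, dotProduct, mul_sub, Finset.sum_sub_distrib]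
  ring

theorem VBr_prolK_mem_CaK {W : PartialJet k l m → PartialJet k l m} {P : PartialJet k l m} (hξ : DifferentiableAt ℝ (prolK k l m a' a'' b) P)
    (ha' : DifferentiableAt ℝ a' P.1.1) (hb : DifferentiableAt ℝ b (P.1.1, P.2.1))
    (hW : DifferentiableAt ℝ W P) (hWC : ∀ᶠ Q in 𝓝 P, W Q ∈ CaK k l m Q) :
    VBr (prolK k l m a' a'' b) W P ∈ CaK k l m P := by
  rw [CaK_eq_ker_contactForm, LinearMap.mem_ker,
    contactForm_VBr (fun _ => rfl) (fun _ => rfl) hξ ha' hb hW hWC,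
    prolK_snd_snd_mulVec ha' hb, sub_self]

def totalDerivative (ν : Fin k) (Q : PartialJet k l m) : PartialJet k l m :=
  ((Pi.single ν 1, 0), Q.2.2 *ᵥ Pi.single ν 1, 0)

theorem contDiff_totalDerivative (ν : Fin k) {n : WithTop ℕ∞} :
    ContDiff ℝ n (totalDerivative (l := l) (m := m) ν) := by
  unfold totalDerivative mulVec dotProduct
  fun_prop

theorem totalDerivative_mem_CaK (ν : Fin k) (Q : PartialJet k l m) :
    totalDerivative ν Q ∈ CaK k l m Q :=
  (mem_CaK_iff Q _).2 rfl

theorem snd_snd_eq_prolK_of_VBr_totalDerivative_mem_CaK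
    {V : PartialJet k l m → PartialJet k l m} {P : PartialJet k l m}
    (hVx : ∀ Q, (V Q).1.1 = a' Q.1.1) (hVy : ∀ Q, (V Q).2.1 = b (Q.1.1, Q.2.1))
    (hV : DifferentiableAt ℝ V P) (ha' : DifferentiableAt ℝ a' P.1.1)
    (hb : DifferentiableAt ℝ b (P.1.1, P.2.1))
    (hVC : ∀ ν, VBr V (totalDerivative ν) P ∈ CaK k l m P) :
    (V P).2.2 = (prolK k l m a' a'' b P).2.2 := by
  ext i ν
  have h := hVC ν
  rw [CaK_eq_ker_contactForm, LinearMap.mem_ker,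
    contactForm_VBr hVx hVy hV ha' hb ((contDiff_totalDerivative ν (n := 1)).differentiable
      one_ne_zero P) (Filter.Eventually.of_forall (totalDerivative_mem_CaK ν)),
    ← prolK_snd_snd_mulVec (a'' := a'') ha' hb, sub_eq_zero] at h
  simpa [totalDerivative, mulVec, dotProduct, Pi.single_apply] using congrFun h i

end PartialJet

theorem partial_prolongation_preserves_partial_cartan_and_unique_general
    (k l m : ℕ)
    (a' : (Fin k → ℝ) → Fin k → ℝ) (a'' : (Fin l → ℝ) → Fin l → ℝ)
    (b : (Fin k → ℝ) × (Fin m → ℝ) → Fin m → ℝ)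
    (ha' : ContDiff ℝ (⊤ : ℕ∞) a') (ha'' : ContDiff ℝ (⊤ : ℕ∞) a'')
    (hb : ContDiff ℝ (⊤ : ℕ∞) b) :
    -- (a) infinitesimal invariance of the partial Cartan distribution
    (∀ Ω : Set (((Fin k → ℝ) × (Fin l → ℝ)) × (Fin m → ℝ) × (Fin m → Fin k → ℝ)),
      IsOpen Ω →
      ∀ W : (((Fin k → ℝ) × (Fin l → ℝ)) × (Fin m → ℝ) × (Fin m → Fin k → ℝ)) →
          (((Fin k → ℝ) × (Fin l → ℝ)) × (Fin m → ℝ) × (Fin m → Fin k → ℝ)),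
        ContDiffOn ℝ (⊤ : ℕ∞) W Ω →
        (∀ P ∈ Ω, W P ∈ CaK k l m P) →
        ∀ P ∈ Ω, VBr (prolK k l m a' a'' b) W P ∈ CaK k l m P)
    ∧
    -- (b) uniqueness
    (∀ V : (((Fin k → ℝ) × (Fin l → ℝ)) × (Fin m → ℝ) × (Fin m → Fin k → ℝ)) →
        (((Fin k → ℝ) × (Fin l → ℝ)) × (Fin m → ℝ) × (Fin m → Fin k → ℝ)),
      ContDiff ℝ (⊤ : ℕ∞) V →
      (∀ P, (V P).1.1 = a' P.1.1 ∧ (V P).1.2 = a'' P.1.2 ∧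
        (V P).2.1 = b (P.1.1, P.2.1)) →
      (∀ Ω : Set (((Fin k → ℝ) × (Fin l → ℝ)) × (Fin m → ℝ) × (Fin m → Fin k → ℝ)),
        IsOpen Ω →
        ∀ W : (((Fin k → ℝ) × (Fin l → ℝ)) × (Fin m → ℝ) × (Fin m → Fin k → ℝ)) →
            (((Fin k → ℝ) × (Fin l → ℝ)) × (Fin m → ℝ) × (Fin m → Fin k → ℝ)),
          ContDiffOn ℝ (⊤ : ℕ∞) W Ω →
          (∀ P ∈ Ω, W P ∈ CaK k l m P) →
          ∀ P ∈ Ω, VBr V W P ∈ CaK k l m P) →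
      ∀ P, V P = prolK k l m a' a'' b P) := by
  have hne : ((⊤ : ℕ∞) : WithTop ℕ∞) ≠ 0 := by simp
  have hξ : ContDiff ℝ (⊤ : ℕ∞) (prolK k l m a' a'' b) := by unfold prolK; fun_prop
  refine ⟨fun Ω hΩ W hW hWC P hP => ?_, fun V hV hVab hVC P => ?_⟩
  · exact PartialJet.VBr_prolK_mem_CaK (hξ.differentiable hne P) (ha'.differentiable hne _)
      (hb.differentiable hne _) ((hW.differentiableOn hne).differentiableAt (hΩ.mem_nhds hP))
      (Filter.eventually_of_mem (hΩ.mem_nhds hP) hWC)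
  · obtain ⟨hVx, hVx'', hVy⟩ := hVab P
    refine Prod.ext (Prod.ext hVx hVx'') (Prod.ext hVy ?_)
    exact PartialJet.snd_snd_eq_prolK_of_VBr_totalDerivative_mem_CaK (fun Q => (hVab Q).1)
      (fun Q => (hVab Q).2.2) (hV.differentiable hne P) (ha'.differentiable hne _)
      (hb.differentiable hne _) fun ν => hVC Set.univ isOpen_univ _
        (PartialJet.contDiff_totalDerivative ν).contDiffOn
        (fun Q _ => PartialJet.totalDerivative_mem_CaK ν Q) P trivial

/-- (a) The prolongation `ξ¹` of an adapted vector field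
`ξ = (a′(x′), a″(x″), b(x′,y))` infinitesimally preserves the partial Cartan
distribution `Ca_K`; (b) `ξ¹` is the unique smooth vector field with this
property whose first blocks of components are `(a′(x′), a″(x″), b(x′,y))`. -/
theorem partial_prolongation_preserves_partial_cartan_and_unique
    (k l m : ℕ) (hk : 1 ≤ k) (hm : 1 ≤ m)
    (a' : (Fin k → ℝ) → Fin k → ℝ) (a'' : (Fin l → ℝ) → Fin l → ℝ)
    (b : (Fin k → ℝ) × (Fin m → ℝ) → Fin m → ℝ)
    (ha' : ContDiff ℝ (⊤ : ℕ∞) a') (ha'' : ContDiff ℝ (⊤ : ℕ∞) a'')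
    (hb : ContDiff ℝ (⊤ : ℕ∞) b) :
    -- (a) infinitesimal invariance of the partial Cartan distribution
    (∀ Ω : Set (((Fin k → ℝ) × (Fin l → ℝ)) × (Fin m → ℝ) × (Fin m → Fin k → ℝ)),
      IsOpen Ω →
      ∀ W : (((Fin k → ℝ) × (Fin l → ℝ)) × (Fin m → ℝ) × (Fin m → Fin k → ℝ)) →
          (((Fin k → ℝ) × (Fin l → ℝ)) × (Fin m → ℝ) × (Fin m → Fin k → ℝ)),
        ContDiffOn ℝ (⊤ : ℕ∞) W Ω →
        (∀ P ∈ Ω, W P ∈ CaK k l m P) →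
        ∀ P ∈ Ω, VBr (prolK k l m a' a'' b) W P ∈ CaK k l m P)
    ∧
    -- (b) uniqueness
    (∀ V : (((Fin k → ℝ) × (Fin l → ℝ)) × (Fin m → ℝ) × (Fin m → Fin k → ℝ)) →
        (((Fin k → ℝ) × (Fin l → ℝ)) × (Fin m → ℝ) × (Fin m → Fin k → ℝ)),
      ContDiff ℝ (⊤ : ℕ∞) V →
      (∀ P, (V P).1.1 = a' P.1.1 ∧ (V P).1.2 = a'' P.1.2 ∧
        (V P).2.1 = b (P.1.1, P.2.1)) →
      (∀ Ω : Set (((Fin k → ℝ) × (Fin l → ℝ)) × (Fin m → ℝ) × (Fin m → Fin k → ℝ)),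
        IsOpen Ω →
        ∀ W : (((Fin k → ℝ) × (Fin l → ℝ)) × (Fin m → ℝ) × (Fin m → Fin k → ℝ)) →
            (((Fin k → ℝ) × (Fin l → ℝ)) × (Fin m → ℝ) × (Fin m → Fin k → ℝ)),
          ContDiffOn ℝ (⊤ : ℕ∞) W Ω →
          (∀ P ∈ Ω, W P ∈ CaK k l m P) →
          ∀ P ∈ Ω, VBr V W P ∈ CaK k l m P) →
      ∀ P, V P = prolK k l m a' a'' b P) :=
  partial_prolongation_preserves_partial_cartan_and_unique_general k l m a' a'' b ha' ha'' hb
end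

section
/- Fix integers n ≥ 0, m ≥ 1, let Λ ⊆ ℝ^m be open, and let h^μ, F^μ_i, Π_i : Λ → ℝ (0 ≤ μ ≤ n, 1 ≤ i ≤ m) be C¹ functions satisfying the Lagrange–Liu compatibility condition ∂h^μ/∂λ^j (λ) = Σ_{i=1}^{m} λ^i · ∂F^μ_i/∂λ^j (λ) for all μ ∈ {0,…,n}, all j ∈ {1,…,m} and all λ ∈ Λ. Then for every open U ⊆ ℝ^{n+1} and every C¹ map λ : U → Λ that solves the balance system Σ_{μ=0}^{n} ∂/∂x^μ [ F^μ_i(λ(x)) ] = Π_i(λ(x)) for all i ∈ {1,…,m} and all x ∈ U, the entropy balance law holds: Σ_{μ=0}^{n} ∂/∂x^μ [ h^μ(λ(x)) ] = Σ_{i=1}^{m} λ^i(x) · Π_i(λ(x)) for all x ∈ U. -/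
/-!
The compatibility condition says that, at every point `l ∈ Λ`, the differential of `h^μ` is the
combination `Σ_i l^i dF^μ_i` of the differentials of the fluxes. Composing with a solution `λ(x)`,
the chain rule transports this identity to `d(h^μ ∘ λ) = Σ_i λ^i(x) d(F^μ_i ∘ λ)`; taking the
`μ`-th partial derivative, summing over `μ` and inserting the balance laws gives the entropy law.
-/

open Finset

theorem ContinuousLinearMap.ext_pi_single_one {R ι M : Type*} [Semiring R] [TopologicalSpace R]
    [Fintype ι] [DecidableEq ι] [AddCommMonoid M] [Module R M] [TopologicalSpace M]
    {f g : (ι → R) →L[R] M} (h : ∀ i, f (Pi.single i 1) = g (Pi.single i 1)) : f = g :=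
  coe_injective <| (Pi.basisFun R ι).ext fun i => by simpa using h i

theorem fderiv_comp_eq_sum_smul_of_fderiv_eq {E F G ι : Type*} [NormedAddCommGroup E]
    [NormedSpace ℝ E] [NormedAddCommGroup F] [NormedSpace ℝ F] [NormedAddCommGroup G]
    [NormedSpace ℝ G] [Fintype ι] {g : E → F} {h : F → G} {Φ : ι → F → G} {c : ι → ℝ} {x : E}
    (hg : DifferentiableAt ℝ g x) (hh : DifferentiableAt ℝ h (g x))
    (hΦ : ∀ i, DifferentiableAt ℝ (Φ i) (g x))
    (hcompat : fderiv ℝ h (g x) = ∑ i, c i • fderiv ℝ (Φ i) (g x)) :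
    fderiv ℝ (h ∘ g) x = ∑ i, c i • fderiv ℝ (Φ i ∘ g) x := by
  ext v
  simp [fderiv_comp x hh hg, hcompat, fderiv_comp x (hΦ _) hg]

theorem entropy_principle_in_dual_variables_general
    (n m : ℕ)
    (Λ : Set (Fin m → ℝ)) (hΛ : IsOpen Λ)
    (h : Fin (n + 1) → (Fin m → ℝ) → ℝ)
    (F : Fin (n + 1) → Fin m → (Fin m → ℝ) → ℝ)
    (Psrc : Fin m → (Fin m → ℝ) → ℝ)
    (hh : ∀ μ, ContDiffOn ℝ 1 (h μ) Λ)
    (hF : ∀ μ i, ContDiffOn ℝ 1 (F μ i) Λ)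
    -- Lagrange–Liu compatibility:  ∂h^μ/∂λ^j = Σ_i λ^i ∂F^μ_i/∂λ^j on Λ
    (hcompat : ∀ (μ : Fin (n + 1)) (j : Fin m), ∀ l ∈ Λ,
      fderiv ℝ (h μ) l (Pi.single j 1)
        = ∑ i, l i * fderiv ℝ (F μ i) l (Pi.single j 1)) :
    ∀ U : Set (Fin (n + 1) → ℝ), IsOpen U →
      ∀ lam : (Fin (n + 1) → ℝ) → Fin m → ℝ,
        ContDiffOn ℝ 1 lam U → (∀ x ∈ U, lam x ∈ Λ) →
        -- lam solves the balance system
        (∀ (i : Fin m), ∀ x ∈ U,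
          ∑ μ, fderiv ℝ (fun t => F μ i (lam t)) x (Pi.single μ 1)
            = Psrc i (lam x)) →
        -- entropy balance law
        ∀ x ∈ U,
          ∑ μ, fderiv ℝ (fun t => h μ (lam t)) x (Pi.single μ 1)
            = ∑ i, lam x i * Psrc i (lam x) := by
  intro U hU lam hlam hmap hbal x hx
  have hΛx : Λ ∈ nhds (lam x) := hΛ.mem_nhds (hmap x hx)
  have hdlam : DifferentiableAt ℝ lam x :=
    (hlam.differentiableOn one_ne_zero).differentiableAt (hU.mem_nhds hx)
  have hcompat_fderiv μ : fderiv ℝ (h μ) (lam x) = ∑ i, lam x i • fderiv ℝ (F μ i) (lam x) :=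
    ContinuousLinearMap.ext_pi_single_one fun j => by
      simpa using hcompat μ j (lam x) (hmap x hx)
  have hchain μ : fderiv ℝ (h μ ∘ lam) x = ∑ i, lam x i • fderiv ℝ (F μ i ∘ lam) x :=
    fderiv_comp_eq_sum_smul_of_fderiv_eq hdlam
      (((hh μ).differentiableOn one_ne_zero).differentiableAt hΛx)
      (fun i => ((hF μ i).differentiableOn one_ne_zero).differentiableAt hΛx) (hcompat_fderiv μ)
  calc ∑ μ, fderiv ℝ (h μ ∘ lam) x (Pi.single μ 1)
      = ∑ μ, ∑ i, lam x i * fderiv ℝ (F μ i ∘ lam) x (Pi.single μ 1) := by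
        simp [hchain]
    _ = ∑ i, lam x i * ∑ μ, fderiv ℝ (fun t => F μ i (lam t)) x (Pi.single μ 1) := by
        rw [sum_comm]
        simp only [mul_sum]
        rfl
    _ = ∑ i, lam x i * Psrc i (lam x) := by
        simp only [hbal _ x hx]

/-- (Entropy principle of RET in Lagrange–Liu variables.)
If the entropy densities/fluxes `h^μ` and the fluxes `F^μ_i` on the open set
`Λ ⊆ ℝ^m` satisfy the compatibility condition
`∂h^μ/∂λ^j = Σ_i λ^i ∂F^μ_i/∂λ^j`, then every `C¹` solution `λ(x)` of the
balance system `Σ_μ ∂_{x^μ}(F^μ_i ∘ λ) = Π_i ∘ λ` also satisfies the entropy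
balance law `Σ_μ ∂_{x^μ}(h^μ ∘ λ) = Σ_i λ^i · (Π_i ∘ λ)`. -/
theorem entropy_principle_in_dual_variables
    (n m : ℕ) (hm : 1 ≤ m)
    (Λ : Set (Fin m → ℝ)) (hΛ : IsOpen Λ)
    (h : Fin (n + 1) → (Fin m → ℝ) → ℝ)
    (F : Fin (n + 1) → Fin m → (Fin m → ℝ) → ℝ)
    (Psrc : Fin m → (Fin m → ℝ) → ℝ)
    (hh : ∀ μ, ContDiffOn ℝ 1 (h μ) Λ)
    (hF : ∀ μ i, ContDiffOn ℝ 1 (F μ i) Λ)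
    (hPsrc : ∀ i, ContDiffOn ℝ 1 (Psrc i) Λ)
    -- Lagrange–Liu compatibility:  ∂h^μ/∂λ^j = Σ_i λ^i ∂F^μ_i/∂λ^j on Λ
    (hcompat : ∀ (μ : Fin (n + 1)) (j : Fin m), ∀ l ∈ Λ,
      fderiv ℝ (h μ) l (Pi.single j 1)
        = ∑ i, l i * fderiv ℝ (F μ i) l (Pi.single j 1)) :
    ∀ U : Set (Fin (n + 1) → ℝ), IsOpen U →
      ∀ lam : (Fin (n + 1) → ℝ) → Fin m → ℝ,
        ContDiffOn ℝ 1 lam U → (∀ x ∈ U, lam x ∈ Λ) →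
        -- lam solves the balance system
        (∀ (i : Fin m), ∀ x ∈ U,
          ∑ μ, fderiv ℝ (fun t => F μ i (lam t)) x (Pi.single μ 1)
            = Psrc i (lam x)) →
        -- entropy balance law
        ∀ x ∈ U,
          ∑ μ, fderiv ℝ (fun t => h μ (lam t)) x (Pi.single μ 1)
            = ∑ i, lam x i * Psrc i (lam x) :=
  entropy_principle_in_dual_variables_general n m Λ hΛ h F Psrc hh hF hcompat
end

section
/- Fix integers n ≥ 0, m ≥ 1, and let L : ℝ^m × ℝ^{m×(n+1)} → ℝ and Π_1, …, Π_m : ℝ^m × ℝ^{m×(n+1)} → ℝ be smooth functions (depending on the fields y and the jet variables z, but not on the space-time point x). Let U ⊆ ℝ^{n+1} be open and let s : U → ℝ^m be a smooth solution of the semi-Lagrangian balance system Σ_{ν=0}^{n} ∂/∂x^ν [ (∂L/∂z^i_ν)( s(x), Ds(x) ) ] = Π_i( s(x), Ds(x) ) for all i ∈ {1,…,m} and x ∈ U. Then for every μ ∈ {0,…,n} the energy–momentum balance law holds on U: Σ_{ν=0}^{n} ∂/∂x^ν [ Σ_{i=1}^{m} (∂L/∂z^i_ν)( s(x), Ds(x)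 ) · ∂_{x^μ} s^i(x) − δ^ν_μ · L( s(x), Ds(x) ) ] = Σ_{i=1}^{m} ( Π_i( s(x), Ds(x) ) − (∂L/∂y^i)( s(x), Ds(x) ) ) · ∂_{x^μ} s^i(x). -/
open Finset

theorem LinearMap.prod_pi_apply_eq_sum {R M ι κ : Type*} [CommSemiring R] [AddCommMonoid M]
    [Module R M] [Fintype ι] [Fintype κ] [DecidableEq ι] [DecidableEq κ]
    (ℓ : ((ι → R) × (ι → κ → R)) →ₗ[R] M) (a : ι → R) (b : ι → κ → R) :
    ℓ (a, b) = ∑ i, a i • ℓ (Pi.single i 1, 0)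
      + ∑ i, ∑ k, b i k • ℓ (0, Pi.single i (Pi.single k 1)) := by
  have ha : a = ∑ i, a i • Pi.single i 1 := by
    ext j; simp [Finset.sum_apply, Pi.single_apply]
  have hb : b = ∑ i, ∑ k, b i k • Pi.single i (Pi.single k 1) := by
    ext j l; simp [Finset.sum_apply, Pi.single_apply, ite_apply]
  have hsplit : ℓ (a, b) = (ℓ ∘ₗ inl R _ _) a + (ℓ ∘ₗ inr R _ _) b := by
    simp [← map_add]
  conv_lhs => rw [hsplit, ha, hb]
  simp [map_sum, map_smul]

section Calculus

variable {E F : Type*} [NormedAddCommGroup E] [NormedSpace ℝ E] [NormedAddCommGroup F]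
  [NormedSpace ℝ F] {x : E}

theorem fderiv_fderiv_apply_comm {f : E → F} (hf : ContDiffAt ℝ 2 f x) (v w : E) :
    fderiv ℝ (fun t => fderiv ℝ f t v) x w = fderiv ℝ (fun t => fderiv ℝ f t w) x v := by
  have hdf : DifferentiableAt ℝ (fderiv ℝ f) x :=
    (hf.fderiv_right (m := 1) le_rfl).differentiableAt one_ne_zero
  rw [fderiv_clm_apply hdf (differentiableAt_const v),
    fderiv_clm_apply hdf (differentiableAt_const w)]
  simpa using hf.isSymmSndFDerivAt (by simp) w v

theorem fderiv_pi_apply {ι : Type*} [Fintype ι] {Φ : E → ι → F}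
    (hΦ : DifferentiableAt ℝ Φ x) (v : E) (i : ι) :
    fderiv ℝ Φ x v i = fderiv ℝ (fun t => Φ t i) x v := by
  rw [fderiv_apply hΦ i]
  rfl

theorem fderiv_sum_mul_apply {ι : Type*} {f g : ι → E → ℝ} (u : Finset ι)
    (hf : ∀ i ∈ u, DifferentiableAt ℝ (f i) x)
    (hg : ∀ i ∈ u, DifferentiableAt ℝ (g i) x) (v : E) :
    fderiv ℝ (fun t => ∑ i ∈ u, f i t * g i t) x v
      = ∑ i ∈ u, (fderiv ℝ (f i) x v * g i x + f i x * fderiv ℝ (g i) x v) := by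
  rw [fderiv_fun_sum (A := fun i t => f i t * g i t)
    (fun i hi => (hf i hi).fun_mul (hg i hi)), _root_.sum_apply]
  refine sum_congr rfl fun i hi => ?_
  rw [fderiv_fun_mul (hf i hi) (hg i hi)]
  simp only [_root_.add_apply, _root_.smul_apply, smul_eq_mul]
  ring

theorem sum_fderiv_sub_ite_apply {ι : Type*} [Fintype ι] [DecidableEq ι] {T : ι → E → F}
    {L : E → F} (hT : ∀ ν, DifferentiableAt ℝ (T ν) x) (hL : DifferentiableAt ℝ L x)
    (e : ι → E) (μ : ι) :
    ∑ ν, fderiv ℝ (fun t => T ν t - if ν = μ then L t else 0) x (e ν)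
      = ∑ ν, fderiv ℝ (T ν) x (e ν) - fderiv ℝ L x (e μ) := by
  have hν (ν : ι) : fderiv ℝ (fun t => T ν t - if ν = μ then L t else 0) x (e ν)
      = fderiv ℝ (T ν) x (e ν) - if ν = μ then fderiv ℝ L x (e μ) else 0 := by
    by_cases h : ν = μ
    · subst h
      simp [fderiv_fun_sub (hT ν) hL]
    · simp [h]
  simp [hν, sum_sub_distrib]

end Calculus

section Jet

variable {n m : ℕ} {s : (Fin (n + 1) → ℝ) → Fin m → ℝ} {x : Fin (n + 1) → ℝ}

theorem ContDiffAt.contDiffAt_jet1 {k : WithTop ℕ∞} (hs : ContDiffAt ℝ (k + 1) s x) :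
    ContDiffAt ℝ k (jet1 n m s) x :=
  contDiffAt_pi.2 fun i => contDiffAt_pi.2 fun _ =>
    ((contDiffAt_pi.1 hs i).fderiv_right le_rfl).clm_apply contDiffAt_const

theorem ContDiffAt.differentiableAt_jet1 (hs : ContDiffAt ℝ 2 s x) :
    DifferentiableAt ℝ (jet1 n m s) x :=
  (hs.contDiffAt_jet1 (k := 1)).differentiableAt one_ne_zero

theorem ContDiffAt.differentiableAt_jet1_apply (hs : ContDiffAt ℝ 2 s x) (i : Fin m)
    (ν : Fin (n + 1)) : DifferentiableAt ℝ (fun t => jet1 n m s t i ν) x :=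
  differentiableAt_pi.1 (differentiableAt_pi.1 hs.differentiableAt_jet1 i) ν

theorem ContDiffAt.differentiableAt_prolongation (hs : ContDiffAt ℝ 2 s x) :
    DifferentiableAt ℝ (fun t => (s t, jet1 n m s t)) x :=
  (hs.differentiableAt two_ne_zero).prodMk hs.differentiableAt_jet1

theorem fderiv_jet1_comm (hs : ContDiffAt ℝ 2 s x) (i : Fin m) (μ ν : Fin (n + 1)) :
    fderiv ℝ (fun t => jet1 n m s t i μ) x (Pi.single ν 1)
      = fderiv ℝ (fun t => jet1 n m s t i ν) x (Pi.single μ 1) :=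
  fderiv_fderiv_apply_comm (contDiffAt_pi.1 hs i) _ _

theorem fderiv_comp_prolongation_apply {F : Type*} [NormedAddCommGroup F] [NormedSpace ℝ F]
    {L : ((Fin m → ℝ) × (Fin m → Fin (n + 1) → ℝ)) → F}
    (hL : DifferentiableAt ℝ L (s x, jet1 n m s x)) (hs : ContDiffAt ℝ 2 s x)
    (v : Fin (n + 1) → ℝ) :
    fderiv ℝ (fun t => L (s t, jet1 n m s t)) x v
      = ∑ i, fderiv ℝ (fun t => s t i) x v
            • fderiv ℝ L (s x, jet1 n m s x) (Pi.single i 1, 0)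
        + ∑ i, ∑ ν, fderiv ℝ (fun t => jet1 n m s t i ν) x v
            • fderiv ℝ L (s x, jet1 n m s x) (0, Pi.single i (Pi.single ν 1)) := by
  have hs1 : DifferentiableAt ℝ s x := hs.differentiableAt two_ne_zero
  have hz := hs.differentiableAt_jet1
  have hzi (i : Fin m) : DifferentiableAt ℝ (fun t => jet1 n m s t i) x :=
    differentiableAt_pi.1 hz i
  rw [fderiv_fun_comp x hL hs.differentiableAt_prolongation, hs1.fderiv_prodMk hz,
    ContinuousLinearMap.comp_apply, ContinuousLinearMap.prod_apply]
  simpa only [ContinuousLinearMap.coe_coe, fderiv_pi_apply hs1, fderiv_pi_apply hz,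
    fderiv_pi_apply (hzi _)] using
    (fderiv ℝ L (s x, jet1 n m s x)).toLinearMap.prod_pi_apply_eq_sum
      (fderiv ℝ s x v) (fderiv ℝ (jet1 n m s) x v)

end Jet

theorem energy_momentum_balance_law_general
    (n m : ℕ)
    (L : ((Fin m → ℝ) × (Fin m → Fin (n + 1) → ℝ)) → ℝ)
    (Psrc : Fin m → ((Fin m → ℝ) × (Fin m → Fin (n + 1) → ℝ)) → ℝ)
    (hL : ContDiff ℝ (⊤ : ℕ∞) L)
    (U : Set (Fin (n + 1) → ℝ)) (hU : IsOpen U)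
    (s : (Fin (n + 1) → ℝ) → Fin m → ℝ) (hs : ContDiffOn ℝ (⊤ : ℕ∞) s U)
    -- s solves the semi-Lagrangian balance system
    (hsol : ∀ (i : Fin m), ∀ x ∈ U,
      ∑ ν, fderiv ℝ
          (fun t => fderiv ℝ L (s t, jet1 n m s t)
            (0, Pi.single i (Pi.single ν 1))) x (Pi.single ν 1)
        = Psrc i (s x, jet1 n m s x)) :
    -- energy–momentum balance law
    ∀ (μ : Fin (n + 1)), ∀ x ∈ U,
      ∑ ν, fderiv ℝ
          (fun t =>
            (∑ i, fderiv ℝ L (s t, jet1 n m s t)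
                (0, Pi.single i (Pi.single ν 1)) * jet1 n m s t i μ)
              - (if ν = μ then L (s t, jet1 n m s t) else 0)) x (Pi.single ν 1)
        = ∑ i, (Psrc i (s x, jet1 n m s x)
              - fderiv ℝ L (s x, jet1 n m s x) (Pi.single i 1, 0))
            * jet1 n m s x i μ := by
  intro μ x hx
  have htop : (2 : WithTop ℕ∞) ≤ ((⊤ : ℕ∞) : WithTop ℕ∞) :=
    WithTop.coe_le_coe.2 le_top
  have hL2 : ContDiff ℝ 2 L := hL.of_le htop
  have hs2 : ContDiffAt ℝ 2 s x := (hs.contDiffAt (hU.mem_nhds hx)).of_le htop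
  have hj := hs2.differentiableAt_prolongation
  have hz := hs2.differentiableAt_jet1_apply
  have hDL : Differentiable ℝ (fderiv ℝ L) :=
    (hL2.fderiv_right (m := 1) le_rfl).differentiable one_ne_zero
  have hF (i : Fin m) (ν : Fin (n + 1)) : DifferentiableAt ℝ
      (fun t => fderiv ℝ L (s t, jet1 n m s t) (0, Pi.single i (Pi.single ν 1))) x :=
    ((hDL _).comp x hj).clm_apply (differentiableAt_const _)
  have hT (ν : Fin (n + 1)) : DifferentiableAt ℝ (fun t => ∑ i,
      fderiv ℝ L (s t, jet1 n m s t) (0, Pi.single i (Pi.single ν 1)) * jet1 n m s t i μ) x :=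
    DifferentiableAt.fun_sum fun i _ => (hF i ν).mul (hz i μ)
  have hLj : DifferentiableAt ℝ (fun t => L (s t, jet1 n m s t)) x :=
    (hL2.differentiable two_ne_zero _).comp x hj
  rw [sum_fderiv_sub_ite_apply hT hLj,
    fderiv_comp_prolongation_apply (hL2.differentiable two_ne_zero _) hs2]
  simp only [fderiv_sum_mul_apply _ (fun i _ => hF i _) (fun i _ => hz i _),
    fderiv_jet1_comm hs2 _ μ, ← hsol _ x hx, sum_comm (γ := Fin (n + 1)) (α := Fin m),
    smul_eq_mul, sum_add_distrib, sub_mul, sum_sub_distrib, sum_mul]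
  simp only [jet1, mul_comm]
  ring

/-- (Energy–momentum balance law for a homogeneous
semi-Lagrangian constitutive relation.) If `s` solves the semi-Lagrangian
balance system `Σ_ν ∂_{x^ν}[ (∂L/∂z^i_ν) ∘ j¹s ] = Π_i ∘ j¹s`, then for each
`μ` the divergence of the energy–momentum tensor
`T^ν_μ = Σ_i (∂L/∂z^i_ν) ∂_{x^μ} s^i − δ^ν_μ L` along `j¹s` equals
`Σ_i (Π_i − ∂L/∂y^i) ∂_{x^μ} s^i`. -/
theorem energy_momentum_balance_law
    (n m : ℕ) (hm : 1 ≤ m)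
    (L : ((Fin m → ℝ) × (Fin m → Fin (n + 1) → ℝ)) → ℝ)
    (Psrc : Fin m → ((Fin m → ℝ) × (Fin m → Fin (n + 1) → ℝ)) → ℝ)
    (hL : ContDiff ℝ (⊤ : ℕ∞) L)
    (hPsrc : ∀ i, ContDiff ℝ (⊤ : ℕ∞) (Psrc i))
    (U : Set (Fin (n + 1) → ℝ)) (hU : IsOpen U)
    (s : (Fin (n + 1) → ℝ) → Fin m → ℝ) (hs : ContDiffOn ℝ (⊤ : ℕ∞) s U)
    -- s solves the semi-Lagrangian balance system
    (hsol : ∀ (i : Fin m), ∀ x ∈ U,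
      ∑ ν, fderiv ℝ
          (fun t => fderiv ℝ L (s t, jet1 n m s t)
            (0, Pi.single i (Pi.single ν 1))) x (Pi.single ν 1)
        = Psrc i (s x, jet1 n m s x)) :
    -- energy–momentum balance law
    ∀ (μ : Fin (n + 1)), ∀ x ∈ U,
      ∑ ν, fderiv ℝ
          (fun t =>
            (∑ i, fderiv ℝ L (s t, jet1 n m s t)
                (0, Pi.single i (Pi.single ν 1)) * jet1 n m s t i μ)
              - (if ν = μ then L (s t, jet1 n m s t) else 0)) x (Pi.single ν 1)
        = ∑ i, (Psrc i (s x, jet1 n m s x)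
              - fderiv ℝ L (s x, jet1 n m s x) (Pi.single i 1, 0))
            * jet1 n m s x i μ :=
  energy_momentum_balance_law_general n m L Psrc hL U hU s hs hsol
end
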